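/- arXiv:2507.23460 — 3 statements merged into one kernel-verified Lean document; each statement's English description precedes it below -/
import Mathlib

section
/- The operators F_1,…,F_{2n−1} defined by F_1 = f_1 and F_{i+1} = ρ F_i ρ^{-1} on non-crossing partitions of [n] satisfy the Temperley–Lieb relations: F_i^2 = τ F_i, F_i F_{i±1} F_i = F_i, and F_i F_j = F_j F_i for |i−j| > 1. -/
/-- A set partition of `{1,…,n}` (as an equivalence relation on `Fin n`) is non-crossing. -/
def Noncross {n : ℕ} (s : Setoid (Fin n)) : Prop :=
  ∀ i j k l : Fin n, i < j → j < k → k < l → s i k → s j l → s i j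

/-- Position of the unprimed point `i` in the interleaved (circular) order
`1', 1, 2', 2, …, n', n` of the `2n` points. -/
def posU {n : ℕ} (i : Fin n) : ℕ := 2 * i.val + 1

/-- Position of the primed point `i'` in the interleaved order (it lies between `i-1` and `i`). -/
def posP {n : ℕ} (i : Fin n) : ℕ := 2 * i.val

/-- No chord of `π` (drawn on the unprimed points) crosses a chord of `σ`
(drawn on the primed points) in the interleaved circular order. -/
def NoMixedCross {n : ℕ} (π σ : Setoid (Fin n)) : Prop :=
  ∀ i k j l : Fin n, π i k → σ j l →
    ¬ (posU i < posP j ∧ posP j < posU k ∧ posU k < posP l) ∧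
    ¬ (posP j < posU i ∧ posU i < posP l ∧ posP l < posU k)

/-- `σ` is the Kreweras complement of the non-crossing partition `π`: it is the coarsest
partition of the primed points which is non-crossing and whose chords do not cross those
of `π`; equivalently, its blocks are the sets of primed points lying in a common region
of the picture of `π`. -/
def IsKrewerasCompl {n : ℕ} (π σ : Setoid (Fin n)) : Prop :=
  Noncross σ ∧ NoMixedCross π σ ∧
    ∀ σ' : Setoid (Fin n), Noncross σ' → NoMixedCross π σ' → σ' ≤ σ

noncomputable section
open Classical

/-- Merge the blocks of `1` and `2` (i.e. of `0` and `1` in `Fin n`) into one block. -/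
def mergeFirstTwo {n : ℕ} [NeZero n] (π : Setoid (Fin n)) : Setoid (Fin n) :=
  π ⊔ Relation.EqvGen.setoid (fun x y => x = (0 : Fin n) ∧ y = (1 : Fin n))

/-- The operator `f₁` on basis elements of the free module on set partitions:
`f₁(π) = τ·π` if `1` and `2` lie in the same block of `π`, and otherwise `f₁(π)` is the
partition obtained by merging the blocks of `1` and `2`. -/
def f1Basis (n : ℕ) [NeZero n] (τ : ℂ) (π : Setoid (Fin n)) : Setoid (Fin n) →₀ ℂ :=
  if π (0 : Fin n) (1 : Fin n) then τ • Finsupp.single π 1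
  else Finsupp.single (mergeFirstTwo π) 1

/-- `F₁ = f₁`, extended linearly to the free module on set partitions of `[n]`. -/
def F1op (n : ℕ) [NeZero n] (τ : ℂ) : Module.End ℂ (Setoid (Fin n) →₀ ℂ) :=
  Finsupp.lift (Setoid (Fin n) →₀ ℂ) ℂ (Setoid (Fin n)) (f1Basis n τ)

/-- The linear operator induced by a bijection `ρ` of set partitions. -/
def rhoOp (n : ℕ) (ρ : Setoid (Fin n) ≃ Setoid (Fin n)) :
    Module.End ℂ (Setoid (Fin n) →₀ ℂ) :=
  Finsupp.lmapDomain ℂ ℂ ρ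

/-- `F_i := ρ^(i-1) F₁ ρ^(-(i-1))`, i.e. `F_1 = f_1` and `F_{i+1} = ρ F_i ρ⁻¹`. -/
def Fop (n : ℕ) [NeZero n] (τ : ℂ) (ρ : Setoid (Fin n) ≃ Setoid (Fin n)) (i : ℕ) :
    Module.End ℂ (Setoid (Fin n) →₀ ℂ) :=
  (rhoOp n ρ) ^ (i - 1) * F1op n τ * (rhoOp n ρ.symm) ^ (i - 1)

open Fin.NatCast

-- separation geometry
def inside (a b x : ℕ) : Prop := (a < x ∧ x < b) ∨ (b < x ∧ x < a)
def ss (a b p q : ℕ) : Prop := inside a b p ↔ inside a b q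

def Krew {n : ℕ} (π : Setoid (Fin n)) : Setoid (Fin n) where
  r j l := ∀ i k : Fin n, π i k → ss (posU i) (posU k) (posP j) (posP l)
  iseqv := by
    constructor
    · intro j i k h; exact Iff.rfl
    · intro j l h i k hik; exact (h i k hik).symm
    · intro a b c h1 h2 i k hik; exact (h1 i k hik).trans (h2 i k hik)

lemma krew_noncross {n : ℕ} (π : Setoid (Fin n)) : Noncross (Krew π) := by
  intro i j k l hij hjk hkl hik hjl u v huv
  have h1 := hik u v huv
  have h2 := hjl u v huv
  have hij' : 2 * i.val < 2 * j.val := by have := hij; omega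
  have hjk' : 2 * j.val < 2 * k.val := by have := hjk; omega
  have hkl' : 2 * k.val < 2 * l.val := by have := hkl; omega
  unfold ss inside posU posP at *
  omega

lemma krew_nomixed {n : ℕ} (π : Setoid (Fin n)) : NoMixedCross π (Krew π) := by
  intro i k j l hik hjl
  have h := hjl i k hik
  unfold ss inside posU posP at *
  constructor <;> (intro hpat; omega)

lemma krew_max {n : ℕ} (π : Setoid (Fin n)) (σ' : Setoid (Fin n))
    (h : NoMixedCross π σ') : σ' ≤ Krew π := by
  intro j l hjl i k hik
  have H1 := h i k j l hik hjl
  have H2 := h k i j l (π.symm hik) hjl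
  have H3 := h i k l j hik (σ'.symm hjl)
  have H4 := h k i l j (π.symm hik) (σ'.symm hjl)
  unfold posU posP at *
  unfold ss inside
  omega

lemma krew_isCompl {n : ℕ} (π : Setoid (Fin n)) : IsKrewerasCompl π (Krew π) :=
  ⟨krew_noncross π, krew_nomixed π, fun σ' _ h => krew_max π σ' h⟩

lemma myCompl_unique {n : ℕ} {π σ σ' : Setoid (Fin n)}
    (h : IsKrewerasCompl π σ) (h' : IsKrewerasCompl π σ') : σ = σ' :=
  le_antisymm (h'.2.2 σ h.1 h.2.1) (h.2.2 σ' h'.1 h'.2.1)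

def mergeAt {n : ℕ} (a b : Fin n) (π : Setoid (Fin n)) : Setoid (Fin n) :=
  π ⊔ Relation.EqvGen.setoid (fun x y => x = a ∧ y = b)

def mergeRel {n : ℕ} (a b : Fin n) (π : Setoid (Fin n)) : Setoid (Fin n) where
  r x y := π x y ∨ (π x a ∧ π b y) ∨ (π x b ∧ π a y)
  iseqv := by
    constructor
    · intro x; exact Or.inl (π.refl x)
    · intro x y h
      rcases h with h | ⟨h1, h2⟩ | ⟨h1, h2⟩
      · exact Or.inl (π.symm h)
      · exact Or.inr (Or.inr ⟨π.symm h2, π.symm h1⟩)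
      · exact Or.inr (Or.inl ⟨π.symm h2, π.symm h1⟩)
    · intro x y z h1 h2
      rcases h1 with h1 | ⟨ha, hb⟩ | ⟨ha, hb⟩ <;>
        rcases h2 with h2 | ⟨hc, hd⟩ | ⟨hc, hd⟩
      · exact Or.inl (π.trans h1 h2)
      · exact Or.inr (Or.inl ⟨π.trans h1 hc, hd⟩)
      · exact Or.inr (Or.inr ⟨π.trans h1 hc, hd⟩)
      · exact Or.inr (Or.inl ⟨ha, π.trans hb h2⟩)
      · exact Or.inr (Or.inl ⟨ha, hd⟩)
      · exact Or.inl (π.trans ha hd)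
      · exact Or.inr (Or.inr ⟨ha, π.trans hb h2⟩)
      · exact Or.inl (π.trans ha hd)
      · exact Or.inr (Or.inr ⟨ha, hd⟩)

lemma mergeAt_eq_mergeRel {n : ℕ} (a b : Fin n) (π : Setoid (Fin n)) :
    mergeAt a b π = mergeRel a b π := by
  apply le_antisymm
  · unfold mergeAt
    apply sup_le
    · intro x y h; exact Or.inl h
    · apply Setoid.eqvGen_le
      rintro x y ⟨rfl, rfl⟩
      exact Or.inr (Or.inl ⟨π.refl _, π.refl _⟩)
  · intro x y h
    have hle : Relation.EqvGen.setoid (fun x y => x = a ∧ y = b) ≤ mergeAt a b π :=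
      le_sup_right
    have hab : (mergeAt a b π) a b := hle (Relation.EqvGen.rel a b ⟨rfl, rfl⟩)
    have hπ : π ≤ mergeAt a b π := le_sup_left
    rcases h with h | ⟨h1, h2⟩ | ⟨h1, h2⟩
    · exact hπ h
    · exact (mergeAt a b π).trans (hπ h1) ((mergeAt a b π).trans hab (hπ h2))
    · exact (mergeAt a b π).trans (hπ h1)
        ((mergeAt a b π).trans ((mergeAt a b π).symm hab) (hπ h2))

lemma mergeAt_rel {n : ℕ} (a b : Fin n) (π : Setoid (Fin n)) (x y : Fin n) :
    (mergeAt a b π) x y ↔ (π x y ∨ (π x a ∧ π b y) ∨ (π x b ∧ π a y)) := by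
  rw [mergeAt_eq_mergeRel]; rfl

lemma mergeAt_comm {n : ℕ} (a b c d : Fin n) (π : Setoid (Fin n)) :
    mergeAt a b (mergeAt c d π) = mergeAt c d (mergeAt a b π) := by
  unfold mergeAt; rw [sup_right_comm]

lemma le_mergeAt {n : ℕ} (a b : Fin n) (π : Setoid (Fin n)) : π ≤ mergeAt a b π := le_sup_left

lemma mergeAt_self {n : ℕ} (a b : Fin n) (π : Setoid (Fin n)) : (mergeAt a b π) a b := by
  rw [mergeAt_rel]; exact Or.inr (Or.inl ⟨π.refl _, π.refl _⟩)

def splitAt {n : ℕ} (e : Fin n) (π : Setoid (Fin n)) : Setoid (Fin n) where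
  r x y := (x = e ∧ y = e) ∨ (x ≠ e ∧ y ≠ e ∧ π x y)
  iseqv := by
    constructor
    · intro x
      by_cases h : x = e
      · exact Or.inl ⟨h, h⟩
      · exact Or.inr ⟨h, h, π.refl x⟩
    · rintro x y (⟨h1, h2⟩ | ⟨h1, h2, h3⟩)
      · exact Or.inl ⟨h2, h1⟩
      · exact Or.inr ⟨h2, h1, π.symm h3⟩
    · rintro x y z (⟨h1, h2⟩ | ⟨h1, h2, h3⟩) (⟨h4, h5⟩ | ⟨h4, h5, h6⟩)
      · exact Or.inl ⟨h1, h5⟩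
      · exact absurd h2 h4
      · exact absurd h4 h2
      · exact Or.inr ⟨h1, h5, π.trans h3 h6⟩

lemma splitAt_rel {n : ℕ} (e : Fin n) (π : Setoid (Fin n)) (x y : Fin n) :
    (splitAt e π) x y ↔ ((x = e ∧ y = e) ∨ (x ≠ e ∧ y ≠ e ∧ π x y)) := Iff.rfl

def Single {n : ℕ} (e : Fin n) (π : Setoid (Fin n)) : Prop := ∀ x, π e x → x = e

section rotsec
variable {n : ℕ} [NeZero n]

def rot (π : Setoid (Fin n)) : Setoid (Fin n) where
  r x y := π (x - 1) (y - 1)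
  iseqv := ⟨fun x => π.refl _, fun h => π.symm h, fun h1 h2 => π.trans h1 h2⟩

def rotInv (π : Setoid (Fin n)) : Setoid (Fin n) where
  r x y := π (x + 1) (y + 1)
  iseqv := ⟨fun x => π.refl _, fun h => π.symm h, fun h1 h2 => π.trans h1 h2⟩

lemma rot_rel (π : Setoid (Fin n)) (x y : Fin n) : (rot π) x y ↔ π (x-1) (y-1) := Iff.rfl
lemma rotInv_rel (π : Setoid (Fin n)) (x y : Fin n) : (rotInv π) x y ↔ π (x+1) (y+1) := Iff.rfl

lemma rot_rotInv (π : Setoid (Fin n)) : rot (rotInv π) = π := by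
  apply Setoid.ext; intro x y
  rw [rot_rel, rotInv_rel, sub_add_cancel, sub_add_cancel]

lemma rotInv_rot (π : Setoid (Fin n)) : rotInv (rot π) = π := by
  apply Setoid.ext; intro x y
  rw [rotInv_rel, rot_rel, add_sub_cancel_right, add_sub_cancel_right]

lemma rot_mergeAt (a b : Fin n) (π : Setoid (Fin n)) :
    rot (mergeAt a b π) = mergeAt (a+1) (b+1) (rot π) := by
  apply Setoid.ext; intro x y
  rw [rot_rel, mergeAt_rel, mergeAt_rel]
  simp only [rot_rel, add_sub_cancel_right]

lemma rot_splitAt (e : Fin n) (π : Setoid (Fin n)) :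
    rot (splitAt e π) = splitAt (e+1) (rot π) := by
  apply Setoid.ext; intro x y
  rw [rot_rel, splitAt_rel, splitAt_rel]
  simp only [rot_rel, Ne, sub_eq_iff_eq_add]

lemma single_rotInv (e : Fin n) (π : Setoid (Fin n)) :
    Single e (rotInv π) ↔ Single (e+1) π := by
  constructor
  · intro h x hx
    have hx' : (rotInv π) e (x - 1) := by
      rw [rotInv_rel, sub_add_cancel]; exact hx
    have := h (x - 1) hx'
    calc x = x - 1 + 1 := by rw [sub_add_cancel]
    _ = e + 1 := by rw [this]
  · intro h x hx
    have hx' : π (e+1) (x+1) := hx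
    have := h (x+1) hx'
    exact add_right_cancel this
end rotsec

-- mutuality: crossing is mutual
lemma ss_mutual {a b p q : ℕ} (hap : a ≠ p) (haq : a ≠ q) (hbp : b ≠ p) (hbq : b ≠ q) :
    ss a b p q ↔ ss p q a b := by
  unfold ss inside; constructor <;> (intro h; omega)

-- shift by one, circularly mod 2n
lemma ss_shift {n a b p q : ℕ} (ha : a < 2*n) (hb : b < 2*n) (hp : p < 2*n) (hq : q < 2*n)
    (hap : a ≠ p) (haq : a ≠ q) (hbp : b ≠ p) (hbq : b ≠ q) :
    ss a b p q ↔ ss (if a+1 < 2*n then a+1 else 0) (if b+1 < 2*n then b+1 else 0)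
      (if p+1 < 2*n then p+1 else 0) (if q+1 < 2*n then q+1 else 0) := by
  unfold ss inside
  split_ifs <;> constructor <;> (intro h; omega)

-- path composition for the merge lemma: chords (a,c1),(c2,b) with {c1,c2}={1,3},
-- points p,q even, ≠ 2.
lemma ss_path {a b p q : ℕ} (hao : a % 2 = 1) (hbo : b % 2 = 1) (hpe : p % 2 = 0)
    (hqe : q % 2 = 0) (hp2 : p ≠ 2) (hq2 : q ≠ 2)
    (h1 : ss a 1 p q) (h2 : ss 3 b p q) : ss a b p q := by
  unfold ss inside at *
  omega

lemma ss_path' {a b p q : ℕ} (hao : a % 2 = 1) (hbo : b % 2 = 1) (hpe : p % 2 = 0)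
    (hqe : q % 2 = 0) (hp2 : p ≠ 2) (hq2 : q ≠ 2)
    (h1 : ss a 3 p q) (h2 : ss 1 b p q) : ss a b p q := by
  unfold ss inside at *
  omega

section geom
variable {n : ℕ} [NeZero n]

lemma shift_posU (u : Fin n) :
    (if posU u + 1 < 2*n then posU u + 1 else 0) = posP (u+1) := by
  have hu := u.isLt
  have h1 : ((u+1 : Fin n)).val = (u.val + 1) % n := by
    rw [Fin.val_add, Fin.val_one']
    conv_rhs => rw [Nat.add_mod, Nat.mod_eq_of_lt hu]
  unfold posU posP
  rw [h1]
  rcases Nat.lt_or_ge (u.val + 1) n with h | h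
  · rw [Nat.mod_eq_of_lt h]; have : 2 * u.val + 1 + 1 < 2 * n := by omega
    rw [if_pos this]; omega
  · have he : u.val + 1 = n := by omega
    rw [he, Nat.mod_self, if_neg (by omega)]

lemma shift_posP (p : Fin n) :
    (if posP p + 1 < 2*n then posP p + 1 else 0) = posU p := by
  have := p.isLt; unfold posU posP
  rw [if_pos (by omega)]

lemma posU_lt (u : Fin n) : posU u < 2*n := by have := u.isLt; unfold posU; omega
lemma posP_lt (u : Fin n) : posP u < 2*n := by have := u.isLt; unfold posP; omega
lemma posU_odd (u : Fin n) : posU u % 2 = 1 := by unfold posU; omega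
lemma posP_even (u : Fin n) : posP u % 2 = 0 := by unfold posP; omega
lemma posU_ne_posP (u v : Fin n) : posU u ≠ posP v := by unfold posU posP; omega

-- single circular shift of an ss-statement: chord at posU's, points at posP's
lemma ss_stepUP {a b : Fin n} {p q : Fin n}
    (h : ss (posU a) (posU b) (posP p) (posP q)) :
    ss (posU p) (posU q) (posP (a+1)) (posP (b+1)) := by
  have h2 := (ss_mutual (posU_ne_posP a p) (posU_ne_posP a q) (posU_ne_posP b p)
    (posU_ne_posP b q)).mp h
  have h3 := (ss_shift (posP_lt p) (posP_lt q) (posU_lt a) (posU_lt b)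
    (Ne.symm (posU_ne_posP a p)) (Ne.symm (posU_ne_posP b p))
    (Ne.symm (posU_ne_posP a q)) (Ne.symm (posU_ne_posP b q))).mp h2
  rwa [shift_posP, shift_posP, shift_posU, shift_posU] at h3

lemma rot_le_krewkrew (π : Setoid (Fin n)) : rot π ≤ Krew (Krew π) := by
  intro j l h i k hik
  have H := hik (j-1) (l-1) h
  have H2 := ss_stepUP H
  rwa [sub_add_cancel, sub_add_cancel] at H2

lemma ss_stepUP_rev {a b : Fin n} {p q : Fin n}
    (h : ss (posU p) (posU q) (posP (a+1)) (posP (b+1))) :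
    ss (posU a) (posU b) (posP p) (posP q) := by
  have h3 : ss (posP p) (posP q) (posU a) (posU b) := by
    apply (ss_shift (posP_lt p) (posP_lt q) (posU_lt a) (posU_lt b)
      (Ne.symm (posU_ne_posP a p)) (Ne.symm (posU_ne_posP b p))
      (Ne.symm (posU_ne_posP a q)) (Ne.symm (posU_ne_posP b q))).mpr
    rwa [shift_posP, shift_posP, shift_posU, shift_posU]
  exact (ss_mutual (posU_ne_posP a p) (posU_ne_posP a q) (posU_ne_posP b p)
    (posU_ne_posP b q)).mpr h3

lemma krew_rot (π : Setoid (Fin n)) : Krew (rot π) = rot (Krew π) := by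
  apply Setoid.ext; intro j l
  constructor
  · intro h u v huv
    have h2 : (rot π) (u+1) (v+1) := by
      rw [rot_rel, add_sub_cancel_right, add_sub_cancel_right]; exact huv
    have H : ss (posU (u+1)) (posU (v+1)) (posP ((j-1)+1)) (posP ((l-1)+1)) := by
      rw [sub_add_cancel, sub_add_cancel]; exact h (u+1) (v+1) h2
    exact ss_stepUP_rev (ss_stepUP_rev H)
  · intro h i k hik
    have huv : π (i-1) (k-1) := hik
    have H := ss_stepUP (ss_stepUP (h (i-1) (k-1) huv))
    simp only [sub_add_cancel] at H; exact H

lemma krew_antitone {π π' : Setoid (Fin n)} (h : π ≤ π') : Krew π' ≤ Krew π := by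
  intro j l hjl i k hik
  exact hjl i k (h hik)

end geom

section geom2
variable {n : ℕ} [NeZero n] (hn : 2 ≤ n)
include hn

lemma val01 : (0 : Fin n).val = 0 ∧ (1 : Fin n).val = 1 := by
  constructor
  · rfl
  · rw [Fin.val_one', Nat.mod_eq_of_lt (by omega)]

lemma fin_zero_ne_one : (0 : Fin n) ≠ 1 := by
  have h := val01 hn
  intro h0; rw [Fin.ext_iff, h.1, h.2] at h0; omega

-- forward singleton fact: if μ relates 0,1 then 1 is a singleton in Krew μ
lemma singleton_of_rel01 {μ : Setoid (Fin n)} (h01 : μ 0 1) : Single 1 (Krew μ) := by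
  intro x hx
  have H := hx 0 1 h01
  have hv := val01 hn
  unfold ss inside posU posP at H
  rw [hv.1, hv.2] at H
  have hxv : x.val = 1 := by omega
  rw [Fin.ext_iff, hv.2]; exact hxv

-- complement of merge = split of complement
lemma krew_mergeAt01 (μ : Setoid (Fin n)) :
    Krew (mergeAt 0 1 μ) = splitAt 1 (Krew μ) := by
  have hv := val01 hn
  apply Setoid.ext; intro j l
  rw [splitAt_rel]
  constructor
  · intro h
    have hKjl : (Krew μ) j l := fun u v huv => h u v (le_mergeAt 0 1 μ huv)
    by_cases hj : j = 1 <;> by_cases hl : l = 1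
    · exact Or.inl ⟨hj, hl⟩
    · exfalso
      have H := h 0 1 (mergeAt_self 0 1 μ)
      subst hj
      unfold ss inside posU posP at H
      rw [hv.1, hv.2] at H
      exact hl (by rw [Fin.ext_iff, hv.2]; omega)
    · exfalso
      have H := h 0 1 (mergeAt_self 0 1 μ)
      subst hl
      unfold ss inside posU posP at H
      rw [hv.1, hv.2] at H
      exact hj (by rw [Fin.ext_iff, hv.2]; omega)
    · exact Or.inr ⟨hj, hl, hKjl⟩
  · rintro (⟨rfl, rfl⟩ | ⟨hj, hl, hK⟩)
    · exact (Krew (mergeAt 0 1 μ)).refl _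
    · intro u v huv
      rw [mergeAt_rel] at huv
      have hpj : posP j ≠ 2 := by
        intro hc; apply hj; rw [Fin.ext_iff, hv.2]; unfold posP at hc; omega
      have hpl : posP l ≠ 2 := by
        intro hc; apply hl; rw [Fin.ext_iff, hv.2]; unfold posP at hc; omega
      rcases huv with huv | ⟨h1, h2⟩ | ⟨h1, h2⟩
      · exact hK u v huv
      · have A := hK u 0 h1
        have B := hK 1 v h2
        have hA : ss (posU u) 1 (posP j) (posP l) := by
          unfold posU at A ⊢; rw [hv.1] at A; simpa using A
        have hB : ss 3 (posU v) (posP j) (posP l) := by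
          unfold posU at B ⊢; rw [hv.2] at B; simpa using B
        exact ss_path (posU_odd u) (posU_odd v) (posP_even j) (posP_even l) hpj hpl hA hB
      · have A := hK u 1 h1
        have B := hK 0 v h2
        have hA : ss (posU u) 3 (posP j) (posP l) := by
          unfold posU at A ⊢; rw [hv.2] at A; simpa using A
        have hB : ss 1 (posU v) (posP j) (posP l) := by
          unfold posU at B ⊢; rw [hv.1] at B; simpa using B
        exact ss_path' (posU_odd u) (posU_odd v) (posP_even j) (posP_even l) hpj hpl hA hB

end geom2

lemma noncross_splitAt {n : ℕ} {π : Setoid (Fin n)} (h : Noncross π) (e : Fin n) :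
    Noncross (splitAt e π) := by
  intro i j k l hij hjk hkl hik hjl
  rcases hik with ⟨hi, hk⟩ | ⟨hi, hk, hik⟩
  · exact absurd (hi.trans hk.symm) (ne_of_lt (hij.trans hjk))
  rcases hjl with ⟨hj, hl⟩ | ⟨hj, hl, hjl⟩
  · exact absurd (hj.trans hl.symm) (ne_of_lt (hjk.trans hkl))
  exact Or.inr ⟨hi, hj, h i j k l hij hjk hkl hik hjl⟩

-- merging blocks of 0 and 1 preserves noncrossing
lemma noncross_mergeAt01 {n : ℕ} [NeZero n] (hn : 2 ≤ n) {π : Setoid (Fin n)}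
    (h : Noncross π) : Noncross (mergeAt 0 1 π) := by
  have hv := val01 hn
  intro i j k l hij hjk hkl hik hjl
  rw [mergeAt_rel] at hik hjl ⊢
  have hzero_le : ∀ x : Fin n, (0:Fin n) ≤ x := by
    intro x; rw [Fin.le_def, hv.1]; omega
  have m01 : ∀ x y : Fin n, π x 0 ∨ π x 1 → π y 0 ∨ π y 1 →
      (π x y ∨ (π x 0 ∧ π 1 y) ∨ (π x 1 ∧ π 0 y)) := by
    intro x y hx hy
    rcases hx with hx | hx <;> rcases hy with hy | hy
    · exact Or.inl (π.trans hx (π.symm hy))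
    · exact Or.inr (Or.inl ⟨hx, π.symm hy⟩)
    · exact Or.inr (Or.inr ⟨hx, π.symm hy⟩)
    · exact Or.inl (π.trans hx (π.symm hy))
  rcases hik with hik | ⟨hi0, h1k⟩ | ⟨hi1, h0k⟩
  · rcases hjl with hjl | ⟨hj0, h1l⟩ | ⟨hj1, h0l⟩
    · exact Or.inl (h i j k l hij hjk hkl hik hjl)
    · -- pure chord (i,k); j ~ 0
      rcases eq_or_lt_of_le (hzero_le i) with h0i | h0i
      · exact Or.inl (h0i ▸ π.symm hj0)
      · exact Or.inl (π.trans (π.symm (h 0 i j k h0i hij hjk (π.symm hj0) hik)) (π.symm hj0))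
    · -- pure chord (i,k); j ~ 1
      rcases lt_trichotomy (1 : Fin n) i with h1i | h1i | h1i
      · exact Or.inl (π.trans (π.symm (h 1 i j k h1i hij hjk (π.symm hj1) hik)) (π.symm hj1))
      · exact Or.inl (h1i ▸ π.symm hj1)
      · -- i < 1 so i = 0
        have hi0 : i = 0 := by
          rw [Fin.lt_def, hv.2] at h1i; rw [Fin.ext_iff, hv.1]; omega
        subst hi0
        exact Or.inr (Or.inl ⟨π.refl 0, π.symm hj1⟩)
  · rcases hjl with hjl | ⟨hj0, h1l⟩ | ⟨hj1, h0l⟩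
    · -- i ~ 0, 1 ~ k; pure chord (j,l)
      rcases lt_trichotomy (1 : Fin n) j with h1j | h1j | h1j
      · exact Or.inr (Or.inl ⟨hi0, h 1 j k l h1j hjk hkl h1k hjl⟩)
      · exact Or.inr (Or.inl ⟨hi0, h1j ▸ π.refl 1⟩)
      · -- j < 1 impossible since i < j
        exfalso
        rw [Fin.lt_def, hv.2] at h1j
        rw [Fin.lt_def] at hij
        omega
    · exact m01 i j (Or.inl hi0) (Or.inl hj0)
    · exact m01 i j (Or.inl hi0) (Or.inr hj1)
  · rcases hjl with hjl | ⟨hj0, h1l⟩ | ⟨hj1, h0l⟩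
    · -- i ~ 1, 0 ~ k; pure chord (j,l)
      have h0j : (0 : Fin n) < j := lt_of_le_of_lt (hzero_le i) hij
      exact Or.inr (Or.inr ⟨hi1, h 0 j k l h0j hjk hkl h0k hjl⟩)
    · exact m01 i j (Or.inr hi1) (Or.inl hj0)
    · exact m01 i j (Or.inr hi1) (Or.inr hj1)

section rhoSec
variable {n : ℕ} [NeZero n] (ρ : Setoid (Fin n) ≃ Setoid (Fin n))
  (hK : ∀ π, Noncross π → IsKrewerasCompl π (ρ π))
  (hinv : ∀ π, Noncross π → Noncross (ρ.symm π))

include hK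

lemma rho_eq_krew {π : Setoid (Fin n)} (h : Noncross π) : ρ π = Krew π :=
  myCompl_unique (hK π h) (krew_isCompl π)

lemma noncross_rho {π : Setoid (Fin n)} (h : Noncross π) : Noncross (ρ π) := (hK π h).1

include hinv

lemma krew_symm_rho {σ : Setoid (Fin n)} (h : Noncross σ) : Krew (ρ.symm σ) = σ := by
  rw [← rho_eq_krew ρ hK (hinv σ h), Equiv.apply_symm_apply]

lemma krewkrew_eq_rot {σ : Setoid (Fin n)} (h : Noncross σ) :
    Krew (Krew σ) = rot σ := by
  set π₀ := ρ.symm σ with hπ₀def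
  have hπ₀ : Noncross π₀ := hinv σ h
  have hσ : Krew π₀ = σ := krew_symm_rho ρ hK hinv h
  apply le_antisymm
  · -- Krew (Krew σ) ≤ rot σ
    have h1 : rot π₀ ≤ Krew (Krew π₀) := rot_le_krewkrew π₀
    have h2 : Krew (Krew (Krew π₀)) ≤ Krew (rot π₀) := krew_antitone h1
    rw [krew_rot, hσ] at h2
    exact h2
  · -- rot σ ≤ Krew (Krew σ)
    exact rot_le_krewkrew σ

lemma rho_rho_eq_rot {σ : Setoid (Fin n)} (h : Noncross σ) : ρ (ρ σ) = rot σ := by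
  rw [rho_eq_krew ρ hK h, rho_eq_krew ρ hK (krew_noncross σ)]
  exact krewkrew_eq_rot ρ hK hinv h

lemma noncross_rot' {σ : Setoid (Fin n)} (h : Noncross σ) : Noncross (rot σ) := by
  rw [← rho_rho_eq_rot ρ hK hinv h]
  exact noncross_rho ρ hK (noncross_rho ρ hK h)

lemma symm_symm_eq_rotInv {σ : Setoid (Fin n)} (h : Noncross σ) :
    ρ.symm (ρ.symm σ) = rotInv σ := by
  have hx : Noncross (ρ.symm (ρ.symm σ)) := hinv _ (hinv σ h)
  have h2 : ρ (ρ (ρ.symm (ρ.symm σ))) = σ := by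
    rw [Equiv.apply_symm_apply, Equiv.apply_symm_apply]
  rw [rho_rho_eq_rot ρ hK hinv hx] at h2
  calc ρ.symm (ρ.symm σ) = rotInv (rot (ρ.symm (ρ.symm σ))) := (rotInv_rot _).symm
  _ = rotInv σ := by rw [h2]

lemma noncross_rotInv' {σ : Setoid (Fin n)} (h : Noncross σ) : Noncross (rotInv σ) := by
  rw [← symm_symm_eq_rotInv ρ hK hinv h]
  exact hinv _ (hinv σ h)

lemma noncross_mergeAt_adj (hn : 2 ≤ n) (m : ℕ) {σ : Setoid (Fin n)} (h : Noncross σ) :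
    Noncross (mergeAt (m : Fin n) ((m : Fin n)+1) σ) := by
  induction m generalizing σ with
  | zero =>
    have : ((0:ℕ) : Fin n) = (0 : Fin n) := rfl
    rw [this, zero_add]
    exact noncross_mergeAt01 hn h
  | succ m ih =>
    have key : mergeAt ((m+1 : ℕ) : Fin n) (((m+1 : ℕ) : Fin n)+1) σ
        = rot (mergeAt (m : Fin n) ((m : Fin n)+1) (rotInv σ)) := by
      rw [rot_mergeAt, rot_rotInv]
      congr 1 <;> push_cast <;> ring
    rw [key]
    exact noncross_rot' ρ hK hinv (ih (noncross_rotInv' ρ hK hinv h))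

-- backward singleton: if 1 is a singleton of Krew μ then μ 0 1
lemma rel01_of_singleton (hn : 2 ≤ n) {μ : Setoid (Fin n)} (hμ : Noncross μ)
    (hs : Single 1 (Krew μ)) : μ 0 1 := by
  have hv := val01 hn
  have key : (Krew (Krew μ)) 1 (1+1) := by
    intro i k hik
    by_cases hi : i = 1
    · have hk : k = 1 := hs k (hi ▸ hik)
      subst hi; subst hk
      unfold ss inside
      constructor <;> (intro hc; omega)
    · by_cases hk : k = 1
      · have hi1 : i = 1 := hs i (hk ▸ (Krew μ).symm hik)
        exact absurd hi1 hi
      · -- i ≠ 1 ∧ k ≠ 1 : posU i, posU k ∈ {1} ∪ [5, ∞)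
        have hiv : i.val ≠ 1 := fun hc => hi (by rw [Fin.ext_iff, hv.2]; exact hc)
        have hkv : k.val ≠ 1 := fun hc => hk (by rw [Fin.ext_iff, hv.2]; exact hc)
        have h2v : ((1+1 : Fin n)).val = 2 % n := by
          rw [Fin.val_add, hv.2]
        rcases Nat.lt_or_ge n 3 with h3 | h3
        · -- n = 2 : i,k ≠ 1 forces i = k = 0
          have : n = 2 := by omega
          subst this
          have hi0 : i.val = 0 := by have := i.isLt; omega
          have hk0 : k.val = 0 := by have := k.isLt; omega
          unfold ss inside posU posP
          rw [hi0, hk0]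
          constructor <;> (intro hc; omega)
        · have h2v' : ((1+1 : Fin n)).val = 2 := by rw [h2v, Nat.mod_eq_of_lt (by omega)]
          unfold ss inside posU posP
          rw [h2v', hv.2]
          have := i.isLt; have := k.isLt
          constructor <;> (intro hc; omega)
  rw [krewkrew_eq_rot ρ hK hinv hμ] at key
  have : μ (1-1) (1+1-1) := key
  rwa [sub_self, add_sub_cancel_right] at this

end rhoSec

section identities
variable {n : ℕ}

lemma mergeAt_swap (a b : Fin n) (π : Setoid (Fin n)) : mergeAt a b π = mergeAt b a π := by
  apply Setoid.ext; intro x y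
  rw [mergeAt_rel, mergeAt_rel]
  tauto

lemma single_splitAt_self (e : Fin n) (π : Setoid (Fin n)) : Single e (splitAt e π) := by
  rintro x (⟨_, hx⟩ | ⟨he, _, _⟩)
  · exact hx
  · exact absurd rfl he

lemma single_splitAt (e f : Fin n) (π : Setoid (Fin n)) (h : Single e π) :
    Single e (splitAt f π) := by
  rintro x (⟨he, hx⟩ | ⟨_, _, hx⟩)
  · exact hx.trans he.symm
  · exact h x hx

lemma splitAt_not_rel (e : Fin n) (π : Setoid (Fin n)) {a b : Fin n} (hab : a ≠ b)
    (ha : a = e ∨ b = e) : ¬ (splitAt e π) a b := by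
  rintro (⟨h1, h2⟩ | ⟨h1, h2, _⟩)
  · exact hab (h1.trans h2.symm)
  · rcases ha with h | h
    · exact h1 h
    · exact h2 h

lemma not_single_of_rel {e x : Fin n} {π : Setoid (Fin n)} (h : π e x) (hx : x ≠ e) :
    ¬ Single e π := fun hs => hx (hs x h)

-- I1 : merge (a,b) after splitting b restores π, if π a b
lemma merge_split_cancel {a b : Fin n} (hab : a ≠ b) {π : Setoid (Fin n)} (h : π a b) :
    mergeAt a b (splitAt b π) = π := by
  apply Setoid.ext; intro x y
  rw [mergeAt_rel]
  constructor
  · intro hm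
    rcases hm with hs | ⟨hsa, hsb⟩ | ⟨hsa, hsb⟩
    · rcases hs with ⟨hx, hy⟩ | ⟨_, _, hxy⟩
      · subst hx; subst hy; exact π.refl _
      · exact hxy
    · rcases hsb with ⟨_, hy⟩ | ⟨hbb, _, _⟩
      · rcases hsa with ⟨hx, hab'⟩ | ⟨_, _, hxa⟩
        · exact absurd hab' hab
        · rw [hy]; exact π.trans hxa h
      · exact absurd rfl hbb
    · rcases hsa with ⟨hx, _⟩ | ⟨_, hbb, _⟩
      · rcases hsb with ⟨hab', _⟩ | ⟨_, _, hay⟩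
        · exact absurd hab' hab
        · rw [hx]; exact π.trans (π.symm h) hay
      · exact absurd rfl hbb
  · intro hxy
    by_cases hx : x = b <;> by_cases hy : y = b
    · exact Or.inl (Or.inl ⟨hx, hy⟩)
    · exact Or.inr (Or.inr ⟨Or.inl ⟨hx, rfl⟩, Or.inr ⟨hab, hy, π.trans h (hx ▸ hxy)⟩⟩)
    · exact Or.inr (Or.inl ⟨Or.inr ⟨hx, hab, π.trans (hy ▸ hxy) (π.symm h)⟩,
        Or.inl ⟨rfl, hy⟩⟩)
    · exact Or.inl (Or.inr ⟨hx, hy, hxy⟩)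

lemma merge_split_cancel' {a b : Fin n} (hab : a ≠ b) {π : Setoid (Fin n)} (h : π a b) :
    mergeAt a b (splitAt a π) = π := by
  rw [mergeAt_swap]
  exact merge_split_cancel hab.symm (π.symm h)

-- I2 : splitting e after merging e with b restores π, if e was a singleton
lemma split_merge_cancel {e b : Fin n} (heb : e ≠ b) {π : Setoid (Fin n)}
    (h : Single e π) : splitAt e (mergeAt e b π) = π := by
  apply Setoid.ext; intro x y
  rw [splitAt_rel]
  simp only [mergeAt_rel]
  constructor
  · rintro (⟨rfl, rfl⟩ | ⟨hx, hy, (hxy | ⟨hxe, hby⟩ | ⟨hxb, hey⟩)⟩)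
    · exact π.refl _
    · exact hxy
    · exact absurd (h x (π.symm hxe)) hx
    · exact absurd (h y hey) hy
  · intro hxy
    by_cases hx : x = e <;> by_cases hy : y = e
    · exact Or.inl ⟨hx, hy⟩
    · exact absurd (h y (hx ▸ hxy)) hy
    · exact absurd (h x (hy ▸ π.symm hxy)) hx
    · exact Or.inr ⟨hx, hy, Or.inl hxy⟩

lemma split_merge_cancel' {a e : Fin n} (hae : a ≠ e) {π : Setoid (Fin n)}
    (h : Single e π) : splitAt e (mergeAt a e π) = π := by
  rw [mergeAt_swap]
  exact split_merge_cancel (Ne.symm hae) h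

-- C1 : induced merges coincide
lemma merge_induced {a b c d : Fin n} {π : Setoid (Fin n)}
    (hm : (mergeAt c d π) a b) (hab : ¬ π a b) :
    mergeAt a b π = mergeAt c d π ∧ (mergeAt a b π) c d := by
  rw [mergeAt_rel] at hm
  rcases hm with hm | ⟨h1, h2⟩ | ⟨h1, h2⟩
  · exact absurd hm hab
  · constructor
    · apply Setoid.ext; intro x y
      rw [mergeAt_rel, mergeAt_rel]
      constructor
      · rintro (hxy | ⟨hxa, hby⟩ | ⟨hxb, hay⟩)
        · exact Or.inl hxy
        · exact Or.inr (Or.inl ⟨π.trans hxa h1, π.trans h2 hby⟩)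
        · exact Or.inr (Or.inr ⟨π.trans hxb (π.symm h2), π.trans (π.symm h1) hay⟩)
      · rintro (hxy | ⟨hxc, hdy⟩ | ⟨hxd, hcy⟩)
        · exact Or.inl hxy
        · exact Or.inr (Or.inl ⟨π.trans hxc (π.symm h1), π.trans (π.symm h2) hdy⟩)
        · exact Or.inr (Or.inr ⟨π.trans hxd h2, π.trans h1 hcy⟩)
    · rw [mergeAt_rel]
      exact Or.inr (Or.inl ⟨π.symm h1, π.symm h2⟩)
  · constructor
    · apply Setoid.ext; intro x y
      rw [mergeAt_rel, mergeAt_rel]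
      constructor
      · rintro (hxy | ⟨hxa, hby⟩ | ⟨hxb, hay⟩)
        · exact Or.inl hxy
        · exact Or.inr (Or.inr ⟨π.trans hxa h1, π.trans h2 hby⟩)
        · exact Or.inr (Or.inl ⟨π.trans hxb (π.symm h2), π.trans (π.symm h1) hay⟩)
      · rintro (hxy | ⟨hxc, hdy⟩ | ⟨hxd, hcy⟩)
        · exact Or.inl hxy
        · exact Or.inr (Or.inr ⟨π.trans hxc h2, π.trans h1 hdy⟩)
        · exact Or.inr (Or.inl ⟨π.trans hxd (π.symm h1), π.trans (π.symm h2) hcy⟩)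
    · rw [mergeAt_rel]
      exact Or.inr (Or.inr ⟨h2, h1⟩)

-- C2 : induced singletons after a split
lemma split_induced {e f : Fin n} (hef : e ≠ f) {π : Setoid (Fin n)}
    (hs : Single e (splitAt f π)) (hns : ¬ Single e π) :
    splitAt f π = splitAt e π ∧ Single f (splitAt e π) := by
  have hblock : ∀ y, π e y → y = e ∨ y = f := by
    intro y hy
    by_cases hyf : y = f
    · exact Or.inr hyf
    · exact Or.inl (hs y (Or.inr ⟨hef, hyf, hy⟩))
  have hef' : π e f := by
    rcases not_forall.mp hns with ⟨x, hx⟩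
    rcases Classical.not_imp.mp hx with ⟨hx1, hx2⟩
    rcases hblock x hx1 with h | h
    · exact absurd h hx2
    · exact h ▸ hx1
  constructor
  · apply Setoid.ext; intro x y
    rw [splitAt_rel, splitAt_rel]
    constructor
    · rintro (⟨rfl, rfl⟩ | ⟨hxf, hyf, hxy⟩)
      · exact Or.inr ⟨hef.symm, hef.symm, π.refl _⟩
      · by_cases hx : x = e
        · subst hx
          rcases hblock y hxy with h | h
          · exact Or.inl ⟨rfl, h⟩
          · exact absurd h hyf
        · refine Or.inr ⟨hx, ?_, hxy⟩
          intro hy; subst hy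
          rcases hblock x (π.symm hxy) with h | h
          · exact hx h
          · exact hxf h
    · rintro (⟨rfl, rfl⟩ | ⟨hxe, hye, hxy⟩)
      · exact Or.inr ⟨hef, hef, π.refl _⟩
      · by_cases hx : x = f
        · subst hx
          have : π e y := π.trans hef' hxy
          rcases hblock y this with h | h
          · exact absurd h hye
          · exact Or.inl ⟨rfl, h⟩
        · refine Or.inr ⟨hx, ?_, hxy⟩
          intro hy; subst hy
          have : π e x := π.trans hef' (π.symm hxy)
          rcases hblock x this with h | h
          · exact hxe h
          · exact hx h
  · rintro y (⟨hfe, _⟩ | ⟨_, hye, hfy⟩)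
    · exact absurd hfe hef.symm
    · rcases hblock y (π.trans hef' hfy) with h | h
      · exact absurd h hye
      · exact h

-- C3 : split and merge at disjoint places commute
lemma split_merge_comm {e a b : Fin n} (hea : e ≠ a) (heb : e ≠ b) (π : Setoid (Fin n)) :
    splitAt e (mergeAt a b π) = mergeAt a b (splitAt e π) := by
  apply Setoid.ext; intro x y
  rw [splitAt_rel, mergeAt_rel, mergeAt_rel]
  simp only [splitAt_rel]
  constructor
  · rintro (⟨rfl, rfl⟩ | ⟨hx, hy, (hxy | ⟨h1, h2⟩ | ⟨h1, h2⟩)⟩)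
    · exact Or.inl (Or.inl ⟨rfl, rfl⟩)
    · exact Or.inl (Or.inr ⟨hx, hy, hxy⟩)
    · exact Or.inr (Or.inl ⟨Or.inr ⟨hx, hea.symm, h1⟩, Or.inr ⟨heb.symm, hy, h2⟩⟩)
    · exact Or.inr (Or.inr ⟨Or.inr ⟨hx, heb.symm, h1⟩, Or.inr ⟨hea.symm, hy, h2⟩⟩)
  · rintro ((⟨rfl, rfl⟩ | ⟨hx, hy, hxy⟩) |
      ⟨(⟨rfl, hae⟩ | ⟨hx, _, h1⟩), (⟨hbe, rfl⟩ | ⟨_, hy, h2⟩)⟩ |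
      ⟨(⟨rfl, hbe⟩ | ⟨hx, _, h1⟩), (⟨hae, rfl⟩ | ⟨_, hy, h2⟩)⟩)
    · exact Or.inl ⟨rfl, rfl⟩
    · exact Or.inr ⟨hx, hy, Or.inl hxy⟩
    · exact absurd hae.symm hea
    · exact absurd hae.symm hea
    · exact absurd hbe.symm heb
    · exact Or.inr ⟨hx, hy, Or.inr (Or.inl ⟨h1, h2⟩)⟩
    · exact absurd hbe.symm heb
    · exact absurd hbe.symm heb
    · exact absurd hae.symm hea
    · exact Or.inr ⟨hx, hy, Or.inr (Or.inr ⟨h1, h2⟩)⟩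

-- transports
lemma single_mergeAt_iff {e a b : Fin n} (hea : e ≠ a) (heb : e ≠ b)
    (π : Setoid (Fin n)) : Single e (mergeAt a b π) ↔ Single e π := by
  constructor
  · intro h x hx
    exact h x (le_mergeAt a b π hx)
  · intro h x hx
    rw [mergeAt_rel] at hx
    rcases hx with hx | ⟨h1, h2⟩ | ⟨h1, h2⟩
    · exact h x hx
    · exact absurd (h a h1).symm hea
    · exact absurd (h b h1).symm heb

lemma splitAt_rel_iff {e a b : Fin n} (hae : a ≠ e) (hbe : b ≠ e) (π : Setoid (Fin n)) :
    (splitAt e π) a b ↔ π a b := by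
  rw [splitAt_rel]
  constructor
  · rintro (⟨h1, _⟩ | ⟨_, _, h⟩)
    · exact absurd h1 hae
    · exact h
  · intro h
    exact Or.inr ⟨hae, hbe, h⟩

end identities


lemma mergeFirstTwo_eq {n : ℕ} [NeZero n] (π : Setoid (Fin n)) :
    mergeFirstTwo π = mergeAt 0 1 π := rfl

section plumbing
variable {n : ℕ} [NeZero n] (τ : ℂ)

lemma F1op_single (π : Setoid (Fin n)) :
    F1op n τ (Finsupp.single π 1) = f1Basis n τ π := by
  unfold F1op
  rw [Finsupp.lift_apply, Finsupp.sum_single_index (by simp), one_smul]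

lemma rhoOp_single (e : Setoid (Fin n) ≃ Setoid (Fin n)) (π : Setoid (Fin n)) (c : ℂ) :
    rhoOp n e (Finsupp.single π c) = Finsupp.single (e π) c := by
  unfold rhoOp
  rw [Finsupp.lmapDomain_apply, Finsupp.mapDomain_single]

lemma symm_rho_one (e : Setoid (Fin n) ≃ Setoid (Fin n)) :
    rhoOp n e.symm * rhoOp n e = 1 := by
  apply Finsupp.lhom_ext
  intro a b
  rw [Module.End.mul_apply, rhoOp_single, rhoOp_single, Equiv.symm_apply_apply,
    Module.End.one_apply]

lemma symm_rho_pow_one (e : Setoid (Fin n) ≃ Setoid (Fin n)) (m : ℕ) :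
    (rhoOp n e.symm)^m * (rhoOp n e)^m = 1 := by
  induction m with
  | zero => simp
  | succ m ih =>
    have : (rhoOp n e.symm)^(m+1) * (rhoOp n e)^(m+1)
        = (rhoOp n e.symm)^m * ((rhoOp n e.symm) * (rhoOp n e)) * (rhoOp n e)^m := by
      rw [pow_succ, pow_succ']
      simp only [mul_assoc]
    rw [this, symm_rho_one, mul_one, ih]

lemma F1_sq : F1op n τ * F1op n τ = τ • F1op n τ := by
  apply Finsupp.lhom_ext
  intro π b
  have hb : (Finsupp.single π b : Setoid (Fin n) →₀ ℂ) = b • Finsupp.single π 1 := by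
    rw [Finsupp.smul_single, smul_eq_mul, mul_one]
  rw [Module.End.mul_apply, LinearMap.smul_apply, hb, map_smul, map_smul, smul_comm τ b]
  congr 1
  rw [F1op_single]
  unfold f1Basis
  by_cases h : π (0:Fin n) (1:Fin n)
  · rw [if_pos h, map_smul, F1op_single]
    unfold f1Basis
    rw [if_pos h]
  · rw [if_neg h, F1op_single]
    unfold f1Basis
    rw [mergeFirstTwo_eq, if_pos (mergeAt_self 0 1 π)]

-- Relation (1), fully general
lemma rel1 (ρ : Setoid (Fin n) ≃ Setoid (Fin n)) (i : ℕ) (x : Setoid (Fin n) →₀ ℂ) :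
    Fop n τ ρ i (Fop n τ ρ i x) = τ • Fop n τ ρ i x := by
  have key : Fop n τ ρ i * Fop n τ ρ i = τ • Fop n τ ρ i := by
    unfold Fop
    have h1 : (rhoOp n ρ) ^ (i-1) * F1op n τ * (rhoOp n ρ.symm) ^ (i-1)
        * ((rhoOp n ρ) ^ (i-1) * F1op n τ * (rhoOp n ρ.symm) ^ (i-1))
        = (rhoOp n ρ) ^ (i-1) * (F1op n τ
          * ((rhoOp n ρ.symm) ^ (i-1) * (rhoOp n ρ) ^ (i-1)) * F1op n τ)
          * (rhoOp n ρ.symm) ^ (i-1) := by simp only [mul_assoc]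
    rw [h1, symm_rho_pow_one, mul_one, F1_sq]
    rw [Algebra.mul_smul_comm, Algebra.smul_mul_assoc]
  calc Fop n τ ρ i (Fop n τ ρ i x) = (Fop n τ ρ i * Fop n τ ρ i) x := by
        rw [Module.End.mul_apply]
  _ = τ • Fop n τ ρ i x := by rw [key, LinearMap.smul_apply]

end plumbing

section NF
variable {n : ℕ} [NeZero n] (τ : ℂ) (ρ : Setoid (Fin n) ≃ Setoid (Fin n))
  (hK : ∀ π, Noncross π → IsKrewerasCompl π (ρ π))
  (hinv : ∀ π, Noncross π → Noncross (ρ.symm π))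

lemma Fop_step (j : ℕ) (hj : 1 ≤ j) :
    Fop n τ ρ (j+2) = (rhoOp n ρ)^2 * Fop n τ ρ j * (rhoOp n ρ.symm)^2 := by
  unfold Fop
  have e1 : j + 2 - 1 = 2 + (j-1) := by omega
  rw [e1, pow_add, pow_add]
  simp only [mul_assoc]
  rw [pow_mul_comm]

include hK hinv

lemma S2_single {π : Setoid (Fin n)} (h : Noncross π) :
    ((rhoOp n ρ.symm)^2) (Finsupp.single π 1) = Finsupp.single (rotInv π) 1 := by
  rw [pow_two, Module.End.mul_apply, rhoOp_single, rhoOp_single,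
    symm_symm_eq_rotInv ρ hK hinv h]

lemma R2_single {π : Setoid (Fin n)} (h : Noncross π) :
    ((rhoOp n ρ)^2) (Finsupp.single π 1) = Finsupp.single (rot π) 1 := by
  rw [pow_two, Module.End.mul_apply, rhoOp_single, rhoOp_single]
  congr 1
  exact rho_rho_eq_rot ρ hK hinv h

lemma nf_odd (hn : 2 ≤ n) (k : ℕ) :
    ∀ π : Setoid (Fin n), Noncross π →
    Fop n τ ρ (2*k+1) (Finsupp.single π 1) =
      if π (k : Fin n) ((k:Fin n)+1) then τ • Finsupp.single π 1
      else Finsupp.single (mergeAt (k:Fin n) ((k:Fin n)+1) π) 1 := by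
  induction k with
  | zero =>
    intro π hπ
    have h1 : Fop n τ ρ (2*0+1) = F1op n τ := by
      unfold Fop; norm_num
    rw [h1, F1op_single]
    unfold f1Basis
    simp only [Nat.cast_zero, zero_add, mergeFirstTwo_eq]
  | succ k ih =>
    intro π hπ
    have hcast : ((k+1 : ℕ) : Fin n) = (k : Fin n) + 1 := by push_cast; ring
    have e1 : 2*(k+1)+1 = (2*k+1)+2 := by ring
    rw [e1, Fop_step τ ρ _ (by omega), Module.End.mul_apply, Module.End.mul_apply,
      S2_single ρ hK hinv hπ, ih (rotInv π) (noncross_rotInv' ρ hK hinv hπ)]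
    have hcond : (rotInv π) (k : Fin n) ((k:Fin n)+1) ↔ π ((k:Fin n)+1) ((k:Fin n)+1+1) :=
      Iff.rfl
    by_cases hc : (rotInv π) (k : Fin n) ((k:Fin n)+1)
    · rw [if_pos hc, map_smul, R2_single ρ hK hinv (noncross_rotInv' ρ hK hinv hπ),
        rot_rotInv, if_pos (by rw [hcast]; exact hcond.mp hc)]
    · rw [if_neg hc,
        R2_single ρ hK hinv (noncross_mergeAt_adj ρ hK hinv hn k (noncross_rotInv' ρ hK hinv hπ)),
        rot_mergeAt, rot_rotInv,
        if_neg (by rw [hcast]; exact fun hcc => hc (hcond.mpr hcc)), hcast]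

lemma nf_even (hn : 2 ≤ n) (k : ℕ) :
    ∀ π : Setoid (Fin n), Noncross π →
    Fop n τ ρ (2*k+2) (Finsupp.single π 1) =
      if Single ((k:Fin n)+1) π then τ • Finsupp.single π 1
      else Finsupp.single (splitAt ((k:Fin n)+1) π) 1 := by
  induction k with
  | zero =>
    intro π hπ
    have h1 : Fop n τ ρ (2*0+2) = rhoOp n ρ * F1op n τ * rhoOp n ρ.symm := by
      unfold Fop; norm_num
    have hkrew : Krew (ρ.symm π) = π := krew_symm_rho ρ hK hinv hπ
    have hμNC : Noncross (ρ.symm π) := hinv π hπ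
    rw [h1, Module.End.mul_apply, Module.End.mul_apply, rhoOp_single, F1op_single]
    simp only [Nat.cast_zero, zero_add]
    unfold f1Basis
    by_cases hc : (ρ.symm π) (0 : Fin n) (1 : Fin n)
    · rw [if_pos hc, map_smul, rhoOp_single, Equiv.apply_symm_apply]
      have hsing : Single (1 : Fin n) π := by
        rw [← hkrew]; exact singleton_of_rel01 hn hc
      rw [if_pos hsing]
    · rw [if_neg hc, rhoOp_single, mergeFirstTwo_eq]
      have h2 : ρ (mergeAt 0 1 (ρ.symm π)) = splitAt 1 π := by
        rw [rho_eq_krew ρ hK (noncross_mergeAt01 hn hμNC), krew_mergeAt01 hn, hkrew]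
      have hnsing : ¬ Single ((1:Fin n)) π := by
        intro hs
        exact hc (rel01_of_singleton ρ hK hinv hn hμNC (by rw [hkrew]; exact hs))
      rw [if_neg hnsing, h2]
  | succ k ih =>
    intro π hπ
    have hcast : ((k+1 : ℕ) : Fin n) = (k : Fin n) + 1 := by push_cast; ring
    have e1 : 2*(k+1)+2 = (2*k+2)+2 := by ring
    rw [e1, Fop_step τ ρ _ (by omega), Module.End.mul_apply, Module.End.mul_apply,
      S2_single ρ hK hinv hπ, ih (rotInv π) (noncross_rotInv' ρ hK hinv hπ)]
    have hcond : Single ((k:Fin n)+1) (rotInv π) ↔ Single ((k:Fin n)+1+1) π :=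
      single_rotInv _ _
    by_cases hc : Single ((k:Fin n)+1) (rotInv π)
    · rw [if_pos hc, map_smul, R2_single ρ hK hinv (noncross_rotInv' ρ hK hinv hπ),
        rot_rotInv, if_pos (by rw [hcast]; exact hcond.mp hc)]
    · rw [if_neg hc,
        R2_single ρ hK hinv (noncross_splitAt (noncross_rotInv' ρ hK hinv hπ) _),
        rot_splitAt, rot_rotInv,
        if_neg (by rw [hcast]; exact fun hcc => hc (hcond.mpr hcc)), hcast]

end NF

section helpers
variable {n : ℕ}

lemma splitAt_comm (e f : Fin n) (π : Setoid (Fin n)) :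
    splitAt e (splitAt f π) = splitAt f (splitAt e π) := by
  apply Setoid.ext; intro x y
  constructor
  · rintro (⟨hx, hy⟩ | ⟨hx, hy, (⟨hx', hy'⟩ | ⟨hx', hy', hxy⟩)⟩)
    · by_cases hef : e = f
      · exact Or.inl ⟨hx.trans hef, hy.trans hef⟩
      · exact Or.inr ⟨fun hc => hef (hx.symm.trans hc),
          fun hc => hef (hy.symm.trans hc), Or.inl ⟨hx, hy⟩⟩
    · exact Or.inl ⟨hx', hy'⟩
    · exact Or.inr ⟨hx', hy', Or.inr ⟨hx, hy, hxy⟩⟩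
  · rintro (⟨hx, hy⟩ | ⟨hx, hy, (⟨hx', hy'⟩ | ⟨hx', hy', hxy⟩)⟩)
    · by_cases hef : e = f
      · exact Or.inl ⟨hx.trans hef.symm, hy.trans hef.symm⟩
      · exact Or.inr ⟨fun hc => hef (hx.symm.trans hc).symm,
          fun hc => hef (hy.symm.trans hc).symm, Or.inl ⟨hx, hy⟩⟩
    · exact Or.inl ⟨hx', hy'⟩
    · exact Or.inr ⟨hx', hy', Or.inr ⟨hx, hy, hxy⟩⟩

lemma fin_succ_ne [NeZero n] (hn : 2 ≤ n) (x : Fin n) : x + 1 ≠ x := by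
  intro h
  have h1 : x + 1 = x + 0 := by rw [add_zero]; exact h
  have h2 : (1 : Fin n) = 0 := add_left_cancel h1
  rw [Fin.ext_iff, Fin.val_one', Nat.mod_eq_of_lt (by omega)] at h2
  simp at h2

lemma fin_cast_ne [NeZero n] {a b : ℕ} (ha : a < n) (hb : b < n) (hab : a ≠ b) :
    (a : Fin n) ≠ (b : Fin n) := by
  intro h
  rw [Fin.ext_iff, Fin.val_cast_of_lt ha, Fin.val_cast_of_lt hb] at h
  exact hab h

end helpers

section relations
variable {n : ℕ} [NeZero n] (τ : ℂ) (ρ : Setoid (Fin n) ≃ Setoid (Fin n))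
  (hK : ∀ π, Noncross π → IsKrewerasCompl π (ρ π))
  (hinv : ∀ π, Noncross π → Noncross (ρ.symm π))

include hK hinv

lemma rel2_odd (hn : 2 ≤ n) (k : ℕ) (π : Setoid (Fin n)) (hπ : Noncross π) :
    Fop n τ ρ (2*k+1) (Fop n τ ρ (2*k+2) (Fop n τ ρ (2*k+1) (Finsupp.single π 1))) =
      Fop n τ ρ (2*k+1) (Finsupp.single π 1) ∧
    Fop n τ ρ (2*k+2) (Fop n τ ρ (2*k+1) (Fop n τ ρ (2*k+2) (Finsupp.single π 1))) =
      Fop n τ ρ (2*k+2) (Finsupp.single π 1) := by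
  set p := (k : Fin n) with hp
  have hpq : p ≠ p + 1 := (fin_succ_ne hn p).symm
  have hπs : Noncross (splitAt (p+1) π) := noncross_splitAt hπ _
  have hπm : Noncross (mergeAt p (p+1) π) := noncross_mergeAt_adj ρ hK hinv hn k hπ
  have nfo : ∀ σ : Setoid (Fin n), Noncross σ → Fop n τ ρ (2*k+1) (Finsupp.single σ 1) =
      if σ p (p+1) then τ • Finsupp.single σ 1
      else Finsupp.single (mergeAt p (p+1) σ) 1 :=
    fun σ hσ => nf_odd τ ρ hK hinv hn k σ hσ
  have nfe : ∀ σ : Setoid (Fin n), Noncross σ → Fop n τ ρ (2*k+2) (Finsupp.single σ 1) =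
      if Single (p+1) σ then τ • Finsupp.single σ 1
      else Finsupp.single (splitAt (p+1) σ) 1 :=
    fun σ hσ => nf_even τ ρ hK hinv hn k σ hσ
  constructor
  · by_cases hc : π p (p+1)
    · rw [nfo π hπ, if_pos hc, map_smul, nfe π hπ,
        if_neg (not_single_of_rel (π.symm hc) hpq), map_smul,
        nfo _ hπs,
        if_neg (splitAt_not_rel (p+1) π hpq (Or.inr rfl)),
        merge_split_cancel hpq hc]
    · rw [nfo π hπ, if_neg hc, nfe _ hπm,
        if_neg (not_single_of_rel ((mergeAt p (p+1) π).symm (mergeAt_self p (p+1) π)) hpq),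
        nfo _ (noncross_splitAt hπm _),
        if_neg (splitAt_not_rel (p+1) (mergeAt p (p+1) π) hpq (Or.inr rfl)),
        merge_split_cancel hpq (mergeAt_self p (p+1) π)]
  · by_cases hs : Single (p+1) π
    · rw [nfe π hπ, if_pos hs, map_smul, nfo π hπ,
        if_neg (show ¬ π p (p+1) from fun hcc => hpq (hs p (π.symm hcc))), map_smul,
        nfe _ hπm,
        if_neg (not_single_of_rel ((mergeAt p (p+1) π).symm (mergeAt_self p (p+1) π)) hpq),
        split_merge_cancel' hpq hs]
    · rw [nfe π hπ, if_neg hs, nfo _ hπs,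
        if_neg (splitAt_not_rel (p+1) π hpq (Or.inr rfl)),
        nfe _ (noncross_mergeAt_adj ρ hK hinv hn k hπs),
        if_neg (not_single_of_rel
          ((mergeAt p (p+1) (splitAt (p+1) π)).symm (mergeAt_self p (p+1) _)) hpq),
        split_merge_cancel' hpq (single_splitAt_self (p+1) π)]

lemma rel2_even (hn : 2 ≤ n) (k : ℕ) (π : Setoid (Fin n)) (hπ : Noncross π) :
    Fop n τ ρ (2*k+2) (Fop n τ ρ (2*k+3) (Fop n τ ρ (2*k+2) (Finsupp.single π 1))) =
      Fop n τ ρ (2*k+2) (Finsupp.single π 1) ∧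
    Fop n τ ρ (2*k+3) (Fop n τ ρ (2*k+2) (Fop n τ ρ (2*k+3) (Finsupp.single π 1))) =
      Fop n τ ρ (2*k+3) (Finsupp.single π 1) := by
  have hcast : ((k+1 : ℕ) : Fin n) = (k : Fin n) + 1 := by push_cast; ring
  set e := (k : Fin n) + 1 with he
  have hef : e ≠ e + 1 := (fin_succ_ne hn e).symm
  have hπs : Noncross (splitAt e π) := noncross_splitAt hπ _
  have nfo : ∀ σ : Setoid (Fin n), Noncross σ → Fop n τ ρ (2*k+3) (Finsupp.single σ 1) =
      if σ e (e+1) then τ • Finsupp.single σ 1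
      else Finsupp.single (mergeAt e (e+1) σ) 1 := by
    intro σ hσ
    have h1 : 2*k+3 = 2*(k+1)+1 := by ring
    rw [h1, nf_odd τ ρ hK hinv hn (k+1) σ hσ, hcast]
  have nfe : ∀ σ : Setoid (Fin n), Noncross σ → Fop n τ ρ (2*k+2) (Finsupp.single σ 1) =
      if Single e σ then τ • Finsupp.single σ 1
      else Finsupp.single (splitAt e σ) 1 :=
    fun σ hσ => nf_even τ ρ hK hinv hn k σ hσ
  have hmadj : ∀ σ : Setoid (Fin n), Noncross σ → Noncross (mergeAt e (e+1) σ) := by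
    intro σ hσ
    have := noncross_mergeAt_adj ρ hK hinv hn (k+1) hσ
    rwa [hcast] at this
  have hπm : Noncross (mergeAt e (e+1) π) := hmadj π hπ
  constructor
  · by_cases hs : Single e π
    · rw [nfe π hπ, if_pos hs, map_smul, nfo π hπ,
        if_neg (show ¬ π e (e+1) from fun hcc => (hef.symm) (hs (e+1) hcc)), map_smul,
        nfe _ hπm,
        if_neg (not_single_of_rel (mergeAt_self e (e+1) π) hef.symm),
        split_merge_cancel hef hs]
    · rw [nfe π hπ, if_neg hs, nfo _ hπs,
        if_neg (splitAt_not_rel e π hef (Or.inl rfl)),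
        nfe _ (hmadj _ hπs),
        if_neg (not_single_of_rel (mergeAt_self e (e+1) (splitAt e π)) hef.symm),
        split_merge_cancel hef (single_splitAt_self e π)]
  · by_cases hm : π e (e+1)
    · rw [nfo π hπ, if_pos hm, map_smul, nfe π hπ,
        if_neg (not_single_of_rel hm hef.symm), map_smul,
        nfo _ hπs, if_neg (splitAt_not_rel e π hef (Or.inl rfl)),
        merge_split_cancel' hef hm]
    · rw [nfo π hπ, if_neg hm, nfe _ hπm,
        if_neg (not_single_of_rel (mergeAt_self e (e+1) π) hef.symm),
        nfo _ (noncross_splitAt hπm _),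
        if_neg (splitAt_not_rel e (mergeAt e (e+1) π) hef (Or.inl rfl)),
        merge_split_cancel' hef (mergeAt_self e (e+1) π)]


lemma comm_oo (hn : 2 ≤ n) (a b : ℕ) (π : Setoid (Fin n)) (hπ : Noncross π) :
    Fop n τ ρ (2*a+1) (Fop n τ ρ (2*b+1) (Finsupp.single π 1)) =
      Fop n τ ρ (2*b+1) (Fop n τ ρ (2*a+1) (Finsupp.single π 1)) := by
  set p := (a : Fin n) with hp
  set q := (b : Fin n) with hq
  have nfa : ∀ σ : Setoid (Fin n), Noncross σ → Fop n τ ρ (2*a+1) (Finsupp.single σ 1) =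
      if σ p (p+1) then τ • Finsupp.single σ 1
      else Finsupp.single (mergeAt p (p+1) σ) 1 :=
    fun σ hσ => nf_odd τ ρ hK hinv hn a σ hσ
  have nfb : ∀ σ : Setoid (Fin n), Noncross σ → Fop n τ ρ (2*b+1) (Finsupp.single σ 1) =
      if σ q (q+1) then τ • Finsupp.single σ 1
      else Finsupp.single (mergeAt q (q+1) σ) 1 :=
    fun σ hσ => nf_odd τ ρ hK hinv hn b σ hσ
  have hma : Noncross (mergeAt p (p+1) π) := noncross_mergeAt_adj ρ hK hinv hn a hπ
  have hmb : Noncross (mergeAt q (q+1) π) := noncross_mergeAt_adj ρ hK hinv hn b hπ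
  by_cases hpc : π p (p+1) <;> by_cases hqc : π q (q+1)
  · have hb : Fop n τ ρ (2*b+1) (Finsupp.single π 1) = τ • Finsupp.single π 1 := by
      rw [nfb π hπ, if_pos hqc]
    have ha : Fop n τ ρ (2*a+1) (Finsupp.single π 1) = τ • Finsupp.single π 1 := by
      rw [nfa π hπ, if_pos hpc]
    rw [hb, map_smul, ha, map_smul, hb]
  · have hbm : Fop n τ ρ (2*b+1) (Finsupp.single π 1)
        = Finsupp.single (mergeAt q (q+1) π) 1 := by rw [nfb π hπ, if_neg hqc]
    have ham : Fop n τ ρ (2*a+1) (Finsupp.single (mergeAt q (q+1) π) 1)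
        = τ • Finsupp.single (mergeAt q (q+1) π) 1 := by
      rw [nfa _ hmb, if_pos (le_mergeAt q (q+1) π hpc)]
    have ha : Fop n τ ρ (2*a+1) (Finsupp.single π 1) = τ • Finsupp.single π 1 := by
      rw [nfa π hπ, if_pos hpc]
    rw [hbm, ham, ha, map_smul, hbm]
  · have hb : Fop n τ ρ (2*b+1) (Finsupp.single π 1) = τ • Finsupp.single π 1 := by
      rw [nfb π hπ, if_pos hqc]
    have ham : Fop n τ ρ (2*a+1) (Finsupp.single π 1)
        = Finsupp.single (mergeAt p (p+1) π) 1 := by rw [nfa π hπ, if_neg hpc]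
    have hbm : Fop n τ ρ (2*b+1) (Finsupp.single (mergeAt p (p+1) π) 1)
        = τ • Finsupp.single (mergeAt p (p+1) π) 1 := by
      rw [nfb _ hma, if_pos (le_mergeAt p (p+1) π hqc)]
    rw [hb, map_smul, ham, hbm]
  · have hbm : Fop n τ ρ (2*b+1) (Finsupp.single π 1)
        = Finsupp.single (mergeAt q (q+1) π) 1 := by rw [nfb π hπ, if_neg hqc]
    have ham : Fop n τ ρ (2*a+1) (Finsupp.single π 1)
        = Finsupp.single (mergeAt p (p+1) π) 1 := by rw [nfa π hπ, if_neg hpc]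
    by_cases hind : (mergeAt q (q+1) π) p (p+1)
    · obtain ⟨heq, hq'⟩ := merge_induced hind hpc
      have h1 : Fop n τ ρ (2*a+1) (Finsupp.single (mergeAt q (q+1) π) 1)
          = τ • Finsupp.single (mergeAt q (q+1) π) 1 := by
        rw [nfa _ hmb, if_pos hind]
      have h2 : Fop n τ ρ (2*b+1) (Finsupp.single (mergeAt p (p+1) π) 1)
          = τ • Finsupp.single (mergeAt p (p+1) π) 1 := by
        rw [nfb _ hma, if_pos hq']
      rw [hbm, h1, ham, h2, heq]
    · have hind' : ¬ (mergeAt p (p+1) π) q (q+1) :=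
        fun hcc => hind (merge_induced hcc hqc).2
      have h1 : Fop n τ ρ (2*a+1) (Finsupp.single (mergeAt q (q+1) π) 1)
          = Finsupp.single (mergeAt p (p+1) (mergeAt q (q+1) π)) 1 := by
        rw [nfa _ hmb, if_neg hind]
      have h2 : Fop n τ ρ (2*b+1) (Finsupp.single (mergeAt p (p+1) π) 1)
          = Finsupp.single (mergeAt q (q+1) (mergeAt p (p+1) π)) 1 := by
        rw [nfb _ hma, if_neg hind']
      rw [hbm, h1, ham, h2, mergeAt_comm]

lemma comm_ee (hn : 2 ≤ n) (a b : ℕ) (hab : (a : Fin n) + 1 ≠ (b : Fin n) + 1)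
    (π : Setoid (Fin n)) (hπ : Noncross π) :
    Fop n τ ρ (2*a+2) (Fop n τ ρ (2*b+2) (Finsupp.single π 1)) =
      Fop n τ ρ (2*b+2) (Fop n τ ρ (2*a+2) (Finsupp.single π 1)) := by
  set e := (a : Fin n) + 1 with hep
  set f := (b : Fin n) + 1 with hfp
  have nfa : ∀ σ : Setoid (Fin n), Noncross σ → Fop n τ ρ (2*a+2) (Finsupp.single σ 1) =
      if Single e σ then τ • Finsupp.single σ 1
      else Finsupp.single (splitAt e σ) 1 :=
    fun σ hσ => nf_even τ ρ hK hinv hn a σ hσ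
  have nfb : ∀ σ : Setoid (Fin n), Noncross σ → Fop n τ ρ (2*b+2) (Finsupp.single σ 1) =
      if Single f σ then τ • Finsupp.single σ 1
      else Finsupp.single (splitAt f σ) 1 :=
    fun σ hσ => nf_even τ ρ hK hinv hn b σ hσ
  have hsa : Noncross (splitAt e π) := noncross_splitAt hπ _
  have hsb : Noncross (splitAt f π) := noncross_splitAt hπ _
  by_cases hec : Single e π <;> by_cases hfc : Single f π
  · have hb : Fop n τ ρ (2*b+2) (Finsupp.single π 1) = τ • Finsupp.single π 1 := by
      rw [nfb π hπ, if_pos hfc]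
    have ha : Fop n τ ρ (2*a+2) (Finsupp.single π 1) = τ • Finsupp.single π 1 := by
      rw [nfa π hπ, if_pos hec]
    rw [hb, map_smul, ha, map_smul, hb]
  · have hbs : Fop n τ ρ (2*b+2) (Finsupp.single π 1)
        = Finsupp.single (splitAt f π) 1 := by rw [nfb π hπ, if_neg hfc]
    have has : Fop n τ ρ (2*a+2) (Finsupp.single (splitAt f π) 1)
        = τ • Finsupp.single (splitAt f π) 1 := by
      rw [nfa _ hsb, if_pos (single_splitAt e f π hec)]
    have ha : Fop n τ ρ (2*a+2) (Finsupp.single π 1) = τ • Finsupp.single π 1 := by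
      rw [nfa π hπ, if_pos hec]
    rw [hbs, has, ha, map_smul, hbs]
  · have hb : Fop n τ ρ (2*b+2) (Finsupp.single π 1) = τ • Finsupp.single π 1 := by
      rw [nfb π hπ, if_pos hfc]
    have has : Fop n τ ρ (2*a+2) (Finsupp.single π 1)
        = Finsupp.single (splitAt e π) 1 := by rw [nfa π hπ, if_neg hec]
    have hbs : Fop n τ ρ (2*b+2) (Finsupp.single (splitAt e π) 1)
        = τ • Finsupp.single (splitAt e π) 1 := by
      rw [nfb _ hsa, if_pos (single_splitAt f e π hfc)]
    rw [hb, map_smul, has, hbs]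
  · have hbs : Fop n τ ρ (2*b+2) (Finsupp.single π 1)
        = Finsupp.single (splitAt f π) 1 := by rw [nfb π hπ, if_neg hfc]
    have has : Fop n τ ρ (2*a+2) (Finsupp.single π 1)
        = Finsupp.single (splitAt e π) 1 := by rw [nfa π hπ, if_neg hec]
    by_cases hind : Single e (splitAt f π)
    · obtain ⟨heq, hf'⟩ := split_induced hab hind hec
      have h1 : Fop n τ ρ (2*a+2) (Finsupp.single (splitAt f π) 1)
          = τ • Finsupp.single (splitAt f π) 1 := by rw [nfa _ hsb, if_pos hind]
      have h2 : Fop n τ ρ (2*b+2) (Finsupp.single (splitAt e π) 1)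
          = τ • Finsupp.single (splitAt e π) 1 := by rw [nfb _ hsa, if_pos hf']
      rw [hbs, h1, has, h2, heq]
    · have hind' : ¬ Single f (splitAt e π) :=
        fun hcc => hind (split_induced hab.symm hcc hfc).2
      have h1 : Fop n τ ρ (2*a+2) (Finsupp.single (splitAt f π) 1)
          = Finsupp.single (splitAt e (splitAt f π)) 1 := by rw [nfa _ hsb, if_neg hind]
      have h2 : Fop n τ ρ (2*b+2) (Finsupp.single (splitAt e π) 1)
          = Finsupp.single (splitAt f (splitAt e π)) 1 := by rw [nfb _ hsa, if_neg hind']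
      rw [hbs, h1, has, h2, splitAt_comm]

lemma comm_me (hn : 2 ≤ n) (a b : ℕ) (hea : (b : Fin n) + 1 ≠ (a : Fin n))
    (heb : (b : Fin n) + 1 ≠ (a : Fin n) + 1)
    (π : Setoid (Fin n)) (hπ : Noncross π) :
    Fop n τ ρ (2*a+1) (Fop n τ ρ (2*b+2) (Finsupp.single π 1)) =
      Fop n τ ρ (2*b+2) (Fop n τ ρ (2*a+1) (Finsupp.single π 1)) := by
  set p := (a : Fin n) with hp
  set e := (b : Fin n) + 1 with hep
  have nfa : ∀ σ : Setoid (Fin n), Noncross σ → Fop n τ ρ (2*a+1) (Finsupp.single σ 1) =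
      if σ p (p+1) then τ • Finsupp.single σ 1
      else Finsupp.single (mergeAt p (p+1) σ) 1 :=
    fun σ hσ => nf_odd τ ρ hK hinv hn a σ hσ
  have nfb : ∀ σ : Setoid (Fin n), Noncross σ → Fop n τ ρ (2*b+2) (Finsupp.single σ 1) =
      if Single e σ then τ • Finsupp.single σ 1
      else Finsupp.single (splitAt e σ) 1 :=
    fun σ hσ => nf_even τ ρ hK hinv hn b σ hσ
  have hma : Noncross (mergeAt p (p+1) π) := noncross_mergeAt_adj ρ hK hinv hn a hπ
  have hse : Noncross (splitAt e π) := noncross_splitAt hπ _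
  by_cases hpc : π p (p+1) <;> by_cases hec : Single e π
  · have hb : Fop n τ ρ (2*b+2) (Finsupp.single π 1) = τ • Finsupp.single π 1 := by
      rw [nfb π hπ, if_pos hec]
    have ha : Fop n τ ρ (2*a+1) (Finsupp.single π 1) = τ • Finsupp.single π 1 := by
      rw [nfa π hπ, if_pos hpc]
    rw [hb, map_smul, ha, map_smul, hb]
  · have hbs : Fop n τ ρ (2*b+2) (Finsupp.single π 1)
        = Finsupp.single (splitAt e π) 1 := by rw [nfb π hπ, if_neg hec]
    have has : Fop n τ ρ (2*a+1) (Finsupp.single (splitAt e π) 1)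
        = τ • Finsupp.single (splitAt e π) 1 := by
      rw [nfa _ hse, if_pos ((splitAt_rel_iff hea.symm heb.symm π).mpr hpc)]
    have ha : Fop n τ ρ (2*a+1) (Finsupp.single π 1) = τ • Finsupp.single π 1 := by
      rw [nfa π hπ, if_pos hpc]
    rw [hbs, has, ha, map_smul, hbs]
  · have hb : Fop n τ ρ (2*b+2) (Finsupp.single π 1) = τ • Finsupp.single π 1 := by
      rw [nfb π hπ, if_pos hec]
    have ham : Fop n τ ρ (2*a+1) (Finsupp.single π 1)
        = Finsupp.single (mergeAt p (p+1) π) 1 := by rw [nfa π hπ, if_neg hpc]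
    have hbm : Fop n τ ρ (2*b+2) (Finsupp.single (mergeAt p (p+1) π) 1)
        = τ • Finsupp.single (mergeAt p (p+1) π) 1 := by
      rw [nfb _ hma, if_pos ((single_mergeAt_iff hea heb π).mpr hec)]
    rw [hb, map_smul, ham, hbm]
  · have hbs : Fop n τ ρ (2*b+2) (Finsupp.single π 1)
        = Finsupp.single (splitAt e π) 1 := by rw [nfb π hπ, if_neg hec]
    have ham : Fop n τ ρ (2*a+1) (Finsupp.single π 1)
        = Finsupp.single (mergeAt p (p+1) π) 1 := by rw [nfa π hπ, if_neg hpc]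
    have h1 : Fop n τ ρ (2*a+1) (Finsupp.single (splitAt e π) 1)
        = Finsupp.single (mergeAt p (p+1) (splitAt e π)) 1 := by
      rw [nfa _ hse, if_neg (show ¬ (splitAt e π) p (p+1) from
        fun hcc => hpc ((splitAt_rel_iff hea.symm heb.symm π).mp hcc))]
    have h2 : Fop n τ ρ (2*b+2) (Finsupp.single (mergeAt p (p+1) π) 1)
        = Finsupp.single (splitAt e (mergeAt p (p+1) π)) 1 := by
      rw [nfb _ hma, if_neg (fun hcc => hec ((single_mergeAt_iff hea heb π).mp hcc))]
    rw [hbs, h1, ham, h2, split_merge_comm hea heb]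

end relations

/-- The operators `F_1, …, F_{2n-1}` (with `F_1 = f_1`, `F_{i+1} = ρ F_i ρ⁻¹`, `ρ` the
Kreweras complement) satisfy the Temperley–Lieb relations on non-crossing partitions:
`F_i² = τ F_i`, `F_i F_{i±1} F_i = F_i`, and `F_i F_j = F_j F_i` for `|i-j| > 1`. -/
theorem F_ops_satisfy_TL_relations (n : ℕ) [NeZero n] (τ : ℂ)
    (ρ : Setoid (Fin n) ≃ Setoid (Fin n))
    (hK : ∀ π, Noncross π → IsKrewerasCompl π (ρ π))
    (hinv : ∀ π, Noncross π → Noncross (ρ.symm π)) :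
    (∀ i : ℕ, 1 ≤ i → i ≤ 2 * n - 1 → ∀ π : Setoid (Fin n), Noncross π →
      Fop n τ ρ i (Fop n τ ρ i (Finsupp.single π 1)) =
        τ • Fop n τ ρ i (Finsupp.single π 1)) ∧
    (∀ i : ℕ, 1 ≤ i → i + 1 ≤ 2 * n - 1 → ∀ π : Setoid (Fin n), Noncross π →
      Fop n τ ρ i (Fop n τ ρ (i + 1) (Fop n τ ρ i (Finsupp.single π 1))) =
        Fop n τ ρ i (Finsupp.single π 1) ∧
      Fop n τ ρ (i + 1) (Fop n τ ρ i (Fop n τ ρ (i + 1) (Finsupp.single π 1))) =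
        Fop n τ ρ (i + 1) (Finsupp.single π 1)) ∧
    (∀ i j : ℕ, 1 ≤ i → i ≤ 2 * n - 1 → 1 ≤ j → j ≤ 2 * n - 1 → i + 1 < j →
      ∀ π : Setoid (Fin n), Noncross π →
        Fop n τ ρ i (Fop n τ ρ j (Finsupp.single π 1)) =
          Fop n τ ρ j (Fop n τ ρ i (Finsupp.single π 1))) := by
  have hnpos : 0 < n := Nat.pos_of_ne_zero (NeZero.ne n)
  refine ⟨?_, ?_, ?_⟩
  · intro i _ _ π _
    exact rel1 τ ρ i _
  · intro i hi1 hi2 π hπ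
    have hn : 2 ≤ n := by omega
    rcases Nat.even_or_odd (i-1) with ⟨k, hk⟩ | ⟨k, hk⟩
    · have h1 : i = 2*k+1 := by omega
      rw [h1, show 2*k+1+1 = 2*k+2 from by omega]
      exact rel2_odd τ ρ hK hinv hn k π hπ
    · have h1 : i = 2*k+2 := by omega
      rw [h1, show 2*k+2+1 = 2*k+3 from by omega]
      exact rel2_even τ ρ hK hinv hn k π hπ
  · intro i j hi1 hi2 hj1 hj2 hij π hπ
    have hn : 2 ≤ n := by omega
    rcases Nat.even_or_odd (i-1) with ⟨a, ha⟩ | ⟨a, ha⟩ <;>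
      rcases Nat.even_or_odd (j-1) with ⟨b, hb⟩ | ⟨b, hb⟩
    · -- both odd
      have h1 : i = 2*a+1 := by omega
      have h2 : j = 2*b+1 := by omega
      rw [h1, h2]
      exact comm_oo τ ρ hK hinv hn a b π hπ
    · -- i odd, j even
      have h1 : i = 2*a+1 := by omega
      have h2 : j = 2*b+2 := by omega
      have hab : a < b := by omega
      have hbn : b + 1 < n := by omega
      have hc1 : ((b:Fin n)+1) = ((b+1 : ℕ) : Fin n) := by push_cast; ring
      have hc2 : ((a:Fin n)+1) = ((a+1 : ℕ) : Fin n) := by push_cast; ring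
      have hea : ((b:Fin n)+1) ≠ (a : Fin n) := by
        rw [hc1]; exact fin_cast_ne (by omega) (by omega) (by omega)
      have heb : ((b:Fin n)+1) ≠ ((a:Fin n)+1) := by
        rw [hc1, hc2]; exact fin_cast_ne (by omega) (by omega) (by omega)
      rw [h1, h2]
      exact comm_me τ ρ hK hinv hn a b hea heb π hπ
    · -- i even, j odd
      have h1 : i = 2*a+2 := by omega
      have h2 : j = 2*b+1 := by omega
      have hab : a + 2 ≤ b := by omega
      have han : a + 1 < n := by omega
      have hbn : b < n := by omega
      have hc2 : ((a:Fin n)+1) = ((a+1 : ℕ) : Fin n) := by push_cast; ring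
      have hea : ((a:Fin n)+1) ≠ (b : Fin n) := by
        rw [hc2]; exact fin_cast_ne (by omega) (by omega) (by omega)
      have heb : ((a:Fin n)+1) ≠ ((b:Fin n)+1) := by
        have hc1 : ((b:Fin n)+1) = ((b+1 : ℕ) : Fin n) := by push_cast; ring
        rw [hc1, hc2]
        intro hcc
        rw [Fin.ext_iff, Fin.val_natCast, Fin.val_natCast,
          Nat.mod_eq_of_lt (show a+1 < n by omega)] at hcc
        rcases Nat.lt_or_ge (b+1) n with hlt | hge
        · rw [Nat.mod_eq_of_lt hlt] at hcc; omega
        · have hbe : b+1 = n := by omega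
          rw [hbe, Nat.mod_self] at hcc; omega
      rw [h1, h2]
      exact (comm_me τ ρ hK hinv hn b a hea heb π hπ).symm
    · -- both even
      have h1 : i = 2*a+2 := by omega
      have h2 : j = 2*b+2 := by omega
      have hc1 : ((a:Fin n)+1) = ((a+1 : ℕ) : Fin n) := by push_cast; ring
      have hc2 : ((b:Fin n)+1) = ((b+1 : ℕ) : Fin n) := by push_cast; ring
      have hab : ((a:Fin n)+1) ≠ ((b:Fin n)+1) := by
        rw [hc1, hc2]; exact fin_cast_ne (by omega) (by omega) (by omega)
      rw [h1, h2]
      exact comm_ee τ ρ hK hinv hn a b hab π hπ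

end
end

section
/- For each r ≥ 1, the number of increasing r-chains π_1 ≤ π_2 ≤ ⋯ ≤ π_r in the lattice of non-crossing partitions of [n] equals the Fuss–Catalan number (1/(rn+1)) * binomial((r+1)n, n). -/
namespace NCWork

open Finset


/-- Generalized Raney/ballot numbers: `A r m u = C(u+pm, m) - p*C(u+pm-1, m-1)` with `p = r+1`. -/
def A (r : ℕ) : ℕ → ℕ → ℤ
  | 0, _ => 1
  | (m+1), u => (Nat.choose (u + (r+1)*m + r + 1) (m+1) : ℤ)
      - (r+1) * Nat.choose (u + (r+1)*m + r) m

lemma A_zero_left (r u : ℕ) : A r 0 u = 1 := rfl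

lemma cast_pascal (n k : ℕ) :
    ((Nat.choose (n+1) (k+1) : ℤ)) = Nat.choose n k + Nat.choose n (k+1) := by
  have := Nat.choose_succ_succ n k
  exact_mod_cast this

lemma succ_mul_choose' (n k : ℕ) :
    ((n : ℤ) + 1) * Nat.choose n k = Nat.choose (n+1) (k+1) * (k+1) := by
  have := Nat.add_one_mul_choose_eq n k
  exact_mod_cast this

lemma A_zero_right (r m : ℕ) : A r (m+1) 0 = 0 := by
  show (Nat.choose (0 + (r+1)*m + r + 1) (m+1) : ℤ)
      - (r+1) * Nat.choose (0 + (r+1)*m + r) m = 0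
  have h := succ_mul_choose' ((r+1)*m + r) m
  have hn : (((r+1)*m + r : ℕ) : ℤ) + 1 = (r+1) * (m+1) := by push_cast; ring
  rw [hn] at h
  have hm : ((m : ℤ) + 1) ≠ 0 := by positivity
  have : ((r+1 : ℤ)) * Nat.choose ((r+1)*m + r) m = Nat.choose ((r+1)*m + r + 1) (m+1) := by
    refine mul_right_cancel₀ hm ?_
    calc ((r+1 : ℤ)) * Nat.choose ((r+1)*m + r) m * (m+1)
          = ((r+1 : ℤ)) * (m+1) * Nat.choose ((r+1)*m + r) m := by ring
        _ = (Nat.choose ((r+1)*m + r + 1) (m+1) : ℤ) * (m+1) := h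
  simp only [Nat.zero_add, zero_add]
  linarith [this]

lemma A_rec (r : ℕ) : ∀ m u : ℕ, A r (m+1) (u+1) = A r (m+1) u + A r m (u + r + 1)
  | 0, u => by
    show (Nat.choose (u + 1 + (r+1)*0 + r + 1) 1 : ℤ) - (r+1) * Nat.choose (u+1+(r+1)*0+r) 0
        = ((Nat.choose (u + (r+1)*0 + r + 1) 1 : ℤ) - (r+1) * Nat.choose (u+(r+1)*0+r) 0) + 1
    simp only [Nat.choose_one_right, Nat.choose_zero_right]
    push_cast
    ring
  | (m+1), u => by
    show (Nat.choose (u + 1 + (r+1)*(m+1) + r + 1) (m+2) : ℤ)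
        - (r+1) * Nat.choose (u + 1 + (r+1)*(m+1) + r) (m+1)
        = ((Nat.choose (u + (r+1)*(m+1) + r + 1) (m+2) : ℤ)
            - (r+1) * Nat.choose (u + (r+1)*(m+1) + r) (m+1))
          + ((Nat.choose (u + r + 1 + (r+1)*m + r + 1) (m+1) : ℤ)
            - (r+1) * Nat.choose (u + r + 1 + (r+1)*m + r) m)
    have e0 : u + (r+1)*(m+1) + r = (u + (r+1)*m + 2*r) + 1 := by ring
    have e1 : u + 1 + (r+1)*(m+1) + r + 1 = ((u + (r+1)*m + 2*r) + 2) + 1 := by ring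
    have e2 : u + 1 + (r+1)*(m+1) + r = (u + (r+1)*m + 2*r) + 2 := by ring
    have e3 : u + r + 1 + (r+1)*m + r + 1 = (u + (r+1)*m + 2*r) + 2 := by ring
    have e4 : u + r + 1 + (r+1)*m + r = (u + (r+1)*m + 2*r) + 1 := by ring
    have e5 : u + (r+1)*(m+1) + r + 1 = (u + (r+1)*m + 2*r) + 2 := by ring
    rw [e1, e2, e3, e4, e5, e0]
    set b := u + (r+1)*m + 2*r with hb
    -- goal: C(b+3, m+2) - p C(b+2, m+1) = (C(b+2, m+2) - p C(b+1, m+1)) + (C(b+2, m+1) - p C(b+1, m))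
    have p1 := cast_pascal (b+2) (m+1)  -- C(b+3, m+2) = C(b+2, m+1) + C(b+2, m+2)
    have p2 := cast_pascal (b+1) (m+1)  -- C(b+2, m+2) = C(b+1, m+1) + C(b+1, m+2)
    have p3 := cast_pascal (b+1) m      -- C(b+2, m+1) = C(b+1, m) + C(b+1, m+1)
    have f1 : b+1+1 = b+2 := by omega
    have f2 : b+2+1 = b+3 := by omega
    have f3 : m+1+1 = m+2 := by omega
    rw [f2, f3] at p1
    rw [f1, f3] at p2
    rw [f1] at p3
    rw [f2]
    push_cast at p1 p2 p3 ⊢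
    linear_combination p1 - ((r : ℤ)+1) * p3

lemma conv2 (r : ℕ) : ∀ n t s : ℕ,
    (∑ p ∈ Finset.HasAntidiagonal.antidiagonal n, A r p.1 s * A r p.2 t) = A r n (s + t) := by
  intro n
  induction n using Nat.strong_induction_on with
  | _ n ih =>
    intro t
    induction t with
    | zero =>
      intro s
      cases n with
      | zero => simp [A_zero_left]
      | succ n' =>
        rw [Finset.Nat.sum_antidiagonal_succ']
        have : (∑ p ∈ Finset.HasAntidiagonal.antidiagonal n', A r p.1 s * A r (p.2 + 1) 0) = 0 := by
          apply Finset.sum_eq_zero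
          intro p _
          rw [A_zero_right r p.2, mul_zero]
        rw [this, A_zero_left, mul_one, add_zero]
        norm_num
    | succ t iht =>
      intro s
      cases n with
      | zero => simp [A_zero_left]
      | succ n' =>
        have base := iht s
        rw [Finset.Nat.sum_antidiagonal_succ'] at base
        simp only [A_zero_left, mul_one] at base
        rw [Finset.Nat.sum_antidiagonal_succ']
        simp only [A_zero_left, mul_one]
        have step : (∑ p ∈ Finset.HasAntidiagonal.antidiagonal n', A r p.1 s * A r (p.2 + 1) (t+1))
            = (∑ p ∈ Finset.HasAntidiagonal.antidiagonal n', A r p.1 s * A r (p.2 + 1) t)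
              + (∑ p ∈ Finset.HasAntidiagonal.antidiagonal n', A r p.1 s * A r p.2 (t + r + 1)) := by
          rw [← Finset.sum_add_distrib]
          apply Finset.sum_congr rfl
          intro p _
          rw [A_rec r p.2 t]
          ring
        have h2 : (∑ p ∈ Finset.HasAntidiagonal.antidiagonal n', A r p.1 s * A r p.2 (t + r + 1))
            = A r n' (s + t + r + 1) := by
          have h := ih n' (Nat.lt_succ_self n') (t + r + 1) s
          rw [h]; ring_nf
        rw [step, h2, ← add_assoc, base]
        have : s + (t + 1) = (s + t) + 1 := by omega
        rw [this, A_rec r n' (s+t)]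

lemma sum_adT_succ {M : Type*} [AddCommMonoid M] (m n : ℕ) (f : (Fin (m+1) → ℕ) → M) :
    ∑ k ∈ Finset.Nat.antidiagonalTuple (m+1) n, f k
      = ∑ p ∈ Finset.HasAntidiagonal.antidiagonal n, ∑ q ∈ Finset.Nat.antidiagonalTuple m p.2,
          f (Fin.cons p.1 q) := by
  have hs := Finset.sum_sigma (Finset.HasAntidiagonal.antidiagonal n)
    (fun p => Finset.Nat.antidiagonalTuple m p.2) (fun x => f (Fin.cons x.1.1 x.2))
  rw [← hs]
  symm
  apply Finset.sum_nbij' (i := fun x => Fin.cons x.1.1 x.2)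
    (j := fun k => ⟨(k 0, ∑ i : Fin m, k i.succ), Fin.tail k⟩)
  · intro a ha
    simp only [Finset.mem_sigma, Finset.HasAntidiagonal.mem_antidiagonal, Finset.Nat.mem_antidiagonalTuple] at ha ⊢
    rw [Fin.sum_univ_succ]
    simp only [Fin.cons_zero, Fin.cons_succ]
    omega
  · intro k hk
    simp only [Finset.mem_sigma, Finset.HasAntidiagonal.mem_antidiagonal, Finset.Nat.mem_antidiagonalTuple] at hk ⊢
    constructor
    · rw [← hk, Fin.sum_univ_succ]
    · rfl
  · intro a ha
    simp only [Finset.mem_sigma, Finset.HasAntidiagonal.mem_antidiagonal, Finset.Nat.mem_antidiagonalTuple] at ha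
    ext1
    · simp only [Fin.cons_succ, Fin.cons_zero, ha.2, Prod.mk.eta]
    · exact HEq.rfl
  · intro k hk
    exact Fin.cons_self_tail k
  · intro a ha
    rfl

lemma convTuple (r : ℕ) : ∀ m n : ℕ,
    (∑ k ∈ Finset.Nat.antidiagonalTuple m n, ∏ t, A r (k t) 1) = A r n m := by
  intro m
  induction m with
  | zero =>
    intro n
    cases n with
    | zero => simp [A_zero_left]
    | succ n' => simp [A_zero_right]
  | succ m ihm =>
    intro n
    rw [sum_adT_succ]
    have inner : ∀ p ∈ Finset.HasAntidiagonal.antidiagonal n,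
        (∑ q ∈ Finset.Nat.antidiagonalTuple m p.2, ∏ t, A r ((Fin.cons p.1 q : Fin (m+1) → ℕ) t) 1)
          = A r p.1 1 * A r p.2 m := by
      intro p _
      have : ∀ q : Fin m → ℕ, (∏ t, A r ((Fin.cons p.1 q : Fin (m+1) → ℕ) t) 1)
          = A r p.1 1 * ∏ t, A r (q t) 1 := by
        intro q
        rw [Fin.prod_univ_succ]
        simp only [Fin.cons_zero, Fin.cons_succ]
      rw [Finset.sum_congr rfl (fun q _ => this q), ← Finset.mul_sum, ihm p.2]
    rw [Finset.sum_congr rfl inner, conv2 r n m 1]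
    congr 1
    omega

lemma A_shift (r : ℕ) : ∀ n : ℕ, A r (n+1) 1 = A r n (r+1) := by
  intro n
  cases n with
  | zero =>
    show (Nat.choose (1 + (r+1)*0 + r + 1) 1 : ℤ) - (r+1) * Nat.choose (1 + (r+1)*0 + r) 0 = 1
    simp [Nat.choose_one_right, Nat.choose_zero_right]
  | succ n' =>
    show (Nat.choose (1 + (r+1)*(n'+1) + r + 1) (n'+2) : ℤ)
        - (r+1) * Nat.choose (1 + (r+1)*(n'+1) + r) (n'+1)
      = (Nat.choose (r+1 + (r+1)*n' + r + 1) (n'+1) : ℤ)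
        - (r+1) * Nat.choose (r+1 + (r+1)*n' + r) n'
    have e1 : 1 + (r+1)*(n'+1) + r + 1 = ((r+1)*n' + 2*r + 1) + 2 := by ring
    have e2 : 1 + (r+1)*(n'+1) + r = ((r+1)*n' + 2*r + 1) + 1 := by ring
    have e3 : r+1 + (r+1)*n' + r + 1 = ((r+1)*n' + 2*r + 1) + 1 := by ring
    have e4 : r+1 + (r+1)*n' + r = (r+1)*n' + 2*r + 1 := by ring
    rw [e1, e2, e3, e4]
    set c := (r+1)*n' + 2*r + 1 with hc
    -- B := c+1 = (r+1)*(n'+2) : key identity C(c+1, n'+2) = (r+1) * C(c, n'+1)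
    have hB : ((c : ℤ) + 1) = (r+1) * (n'+2) := by push_cast [hc]; ring
    have key : (Nat.choose (c+1) (n'+2) : ℤ) * (n'+2) = (r+1) * (n'+2) * Nat.choose c (n'+1) := by
      have h := succ_mul_choose' c (n'+1)
      rw [hB] at h
      push_cast at h ⊢
      linarith
    have key2 : (Nat.choose (c+1) (n'+2) : ℤ) = (r+1) * Nat.choose c (n'+1) := by
      have hne : ((n' : ℤ)+2) ≠ 0 := by positivity
      apply mul_right_cancel₀ hne
      calc (Nat.choose (c+1) (n'+2) : ℤ) * (n'+2) = (r+1) * (n'+2) * Nat.choose c (n'+1) := key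
        _ = (r+1) * Nat.choose c (n'+1) * (n'+2) := by ring
    have p1 := cast_pascal (c+1) (n'+1)  -- C(c+2, n'+2) = C(c+1, n'+1) + C(c+1, n'+2)
    have p2 := cast_pascal c n'          -- C(c+1, n'+1) = C(c, n') + C(c, n'+1)
    have f1 : c+1+1 = c+2 := by omega
    have f2 : n'+1+1 = n'+2 := by omega
    rw [f1, f2] at p1
    linear_combination p1 + key2 - ((r:ℤ)+1) * p2

lemma A_closed (r : ℕ) : ∀ n : ℕ, ((r*n+1 : ℕ) : ℤ) * A r n 1 = (((r+1)*n).choose n : ℤ) := by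
  intro n
  cases n with
  | zero => simp [A_zero_left]
  | succ n' =>
    show ((r*(n'+1)+1 : ℕ) : ℤ) * ((Nat.choose (1 + (r+1)*n' + r + 1) (n'+1) : ℤ)
        - (r+1) * Nat.choose (1 + (r+1)*n' + r) n') = _
    have e1 : 1 + (r+1)*n' + r + 1 = (r+1)*(n'+1) + 1 := by ring
    have e2 : 1 + (r+1)*n' + r = (r+1)*(n'+1) := by ring
    rw [e1, e2]
    set M := (r+1)*(n'+1) with hM
    have p1 := cast_pascal M n'  -- C(M+1, n'+1) = C(M, n') + C(M, n'+1)
    have csr := Nat.choose_succ_right_eq M n'  -- C(M, n'+1)*(n'+1) = C(M, n')*(M - n')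
    have hMn : M - n' = r*(n'+1) + 1 := by
      have : M = r*(n'+1) + (n'+1) := by rw [hM]; ring
      omega
    rw [hMn] at csr
    have csr' : (Nat.choose M (n'+1) : ℤ) * (n'+1) = (Nat.choose M n' : ℤ) * (r*(n'+1)+1) := by
      exact_mod_cast csr
    push_cast
    push_cast at p1 csr'
    linear_combination ((r:ℤ)*(n'+1)+1) * p1 + (r : ℤ) * csr'

abbrev MCP (r m : ℕ) (f : Fin r → Setoid (Fin m)) : Prop :=
  (∀ i, Noncross (f i)) ∧ ∀ i j : Fin r, i ≤ j → f i ≤ f j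

instance (m : ℕ) : Finite (Setoid (Fin m)) :=
  Finite.of_injective (fun s : Setoid (Fin m) => (⇑s : Fin m → Fin m → Prop))
    (fun _ _ h => Setoid.eq_iff_rel_eq.mpr h)

lemma noncross_comap {a b : ℕ} {e : Fin a → Fin b} (he : StrictMono e) {s : Setoid (Fin b)}
    (hs : Noncross s) : Noncross (Setoid.comap e s) :=
  fun _ _ _ _ hij hjk hkl h1 h2 => hs _ _ _ _ (he hij) (he hjk) (he hkl) h1 h2

lemma le_comap {a b : ℕ} {e : Fin a → Fin b} {s t : Setoid (Fin b)} (h : s ≤ t) :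
    Setoid.comap e s ≤ Setoid.comap e t := fun _ _ hxy => h hxy

section Decomp

variable {r n : ℕ}

/-- Values in the class of the top element. -/
def lastClass (n : ℕ) (s : Setoid (Fin (n+1))) : Set ℕ :=
  {v | ∃ h : v < n + 1, s ⟨v, h⟩ (Fin.last n)}

lemma lastClass_nonempty (s : Setoid (Fin (n+1))) : (lastClass n s).Nonempty :=
  ⟨n, ⟨Nat.lt_succ_self n, Setoid.refl' s _⟩⟩

/-- Minimal value equivalent to the top element. -/
noncomputable def mrep (n : ℕ) (s : Setoid (Fin (n+1))) : ℕ := sInf (lastClass n s)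

lemma mrep_mem (s : Setoid (Fin (n+1))) : mrep n s ∈ lastClass n s :=
  Nat.sInf_mem (lastClass_nonempty s)

lemma mrep_le_n (s : Setoid (Fin (n+1))) : mrep n s ≤ n :=
  Nat.sInf_le ⟨Nat.lt_succ_self n, Setoid.refl' s _⟩

lemma mrep_lt (s : Setoid (Fin (n+1))) : mrep n s < n + 1 :=
  Nat.lt_succ_of_le (mrep_le_n s)

lemma mrep_rel (s : Setoid (Fin (n+1))) : s ⟨mrep n s, mrep_lt s⟩ (Fin.last n) := by
  obtain ⟨h, hrel⟩ := mrep_mem s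
  exact hrel

lemma mrep_min {s : Setoid (Fin (n+1))} {x : Fin (n+1)} (hx : s x (Fin.last n)) :
    mrep n s ≤ x.val :=
  Nat.sInf_le ⟨x.isLt, by convert hx⟩

lemma mrep_mono {s t : Setoid (Fin (n+1))} (h : s ≤ t) : mrep n t ≤ mrep n s := by
  obtain ⟨hlt, hrel⟩ := mrep_mem s
  exact Nat.sInf_le ⟨hlt, h hrel⟩

variable (r)

/-- Boundary values: `bfun f 0 = n`, `bfun f (t+1) = mrep (f t)` for `t < r`, `0` beyond. -/
noncomputable def bfun (f : Fin r → Setoid (Fin (n+1))) : ℕ → ℕ :=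
  fun t => if t = 0 then n else if h : t - 1 < r then mrep n (f ⟨t-1, h⟩) else 0

variable {r}

lemma bfun_zero (f : Fin r → Setoid (Fin (n+1))) : bfun r f 0 = n := rfl

lemma bfun_eq_mrep (f : Fin r → Setoid (Fin (n+1))) (t : ℕ) (h1 : 1 ≤ t) (h2 : t - 1 < r) :
    bfun r f t = mrep n (f ⟨t-1, h2⟩) := by
  unfold bfun
  rw [if_neg (by omega), dif_pos h2]

lemma bfun_beyond (f : Fin r → Setoid (Fin (n+1))) (t : ℕ) (h : r + 1 ≤ t) : bfun r f t = 0 := by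
  unfold bfun
  rw [if_neg (by omega), dif_neg (by omega)]

lemma bfun_succ_le (f : Fin r → Setoid (Fin (n+1)))
    (hc : ∀ i j : Fin r, i ≤ j → f i ≤ f j) (t : ℕ) : bfun r f (t+1) ≤ bfun r f t := by
  rcases Nat.eq_zero_or_pos t with h0 | hpos
  · subst h0
    rcases Nat.lt_or_ge 0 r with hr | hr
    · rw [bfun_eq_mrep f 1 le_rfl (by omega), bfun_zero]
      exact mrep_le_n _
    · rw [bfun_beyond f 1 (by omega), bfun_zero]; omega
  · rcases Nat.lt_or_ge t r with hlt | hge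
    · have h2 : t + 1 - 1 < r := by omega
      rw [bfun_eq_mrep f (t+1) (by omega) h2, bfun_eq_mrep f t (by omega) (by omega)]
      apply mrep_mono
      exact hc _ _ (by simp only [Fin.le_def]; omega)
    · rw [bfun_beyond f (t+1) (by omega)]; omega

lemma bfun_anti (f : Fin r → Setoid (Fin (n+1)))
    (hc : ∀ i j : Fin r, i ≤ j → f i ≤ f j) : Antitone (bfun r f) :=
  antitone_nat_of_succ_le (bfun_succ_le f hc)

lemma bfun_le_n (f : Fin r → Setoid (Fin (n+1)))
    (hc : ∀ i j : Fin r, i ≤ j → f i ≤ f j) (t : ℕ) : bfun r f t ≤ n :=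
  le_trans (bfun_anti f hc (Nat.zero_le t)) (le_of_eq (bfun_zero f))

variable (r) in
/-- Suffix sums of a composition. -/
def suf (k : Fin (r+1) → ℕ) (t : ℕ) : ℕ :=
  ∑ j : Fin (r+1), if t ≤ j.val then k j else 0

lemma suf_zero (k : Fin (r+1) → ℕ) : suf r k 0 = ∑ j, k j := by
  unfold suf; simp

lemma suf_beyond (k : Fin (r+1) → ℕ) (t : ℕ) (h : r + 1 ≤ t) : suf r k t = 0 := by
  unfold suf
  apply Finset.sum_eq_zero
  intro j _
  rw [if_neg (by omega)]

lemma suf_succ (k : Fin (r+1) → ℕ) (t : ℕ) (h : t < r + 1) :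
    suf r k t = k ⟨t, h⟩ + suf r k (t+1) := by
  unfold suf
  rw [show (k ⟨t, h⟩ : ℕ) = ∑ j : Fin (r+1), if j = ⟨t, h⟩ then k j else 0 by
    rw [Finset.sum_ite_eq' Finset.univ (⟨t, h⟩ : Fin (r+1)) k]; simp]
  rw [← Finset.sum_add_distrib]
  apply Finset.sum_congr rfl
  intro j _
  by_cases hj : j = (⟨t, h⟩ : Fin (r+1))
  · subst hj
    simp
  · have : j.val ≠ t := fun hv => hj (Fin.ext hv)
    rw [if_neg hj]
    split_ifs <;> omega

lemma suf_anti (k : Fin (r+1) → ℕ) : Antitone (suf r k) := by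
  apply antitone_nat_of_succ_le
  intro t
  unfold suf
  apply Finset.sum_le_sum
  intro j _
  split_ifs <;> omega

lemma suf_le_total (k : Fin (r+1) → ℕ) (t : ℕ) : suf r k t ≤ ∑ j, k j := by
  rw [← suf_zero]
  exact suf_anti k (Nat.zero_le t)

variable (r) in
/-- The composition extracted from a multichain: segment sizes. -/
noncomputable def kfun (f : Fin r → Setoid (Fin (n+1))) : Fin (r+1) → ℕ :=
  fun t => bfun r f t.val - bfun r f (t.val + 1)

lemma suf_kfun (f : Fin r → Setoid (Fin (n+1)))
    (hc : ∀ i j : Fin r, i ≤ j → f i ≤ f j) :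
    ∀ d t, t + d = r + 1 → suf r (kfun r f) t = bfun r f t := by
  intro d
  induction d with
  | zero =>
    intro t ht
    rw [suf_beyond _ t (by omega), bfun_beyond f t (by omega)]
  | succ d ih =>
    intro t ht
    rw [suf_succ _ t (by omega), ih (t+1) (by omega)]
    show bfun r f t - bfun r f (t+1) + bfun r f (t+1) = bfun r f t
    have := bfun_succ_le f hc t
    omega

lemma ksum (f : Fin r → Setoid (Fin (n+1)))
    (hc : ∀ i j : Fin r, i ≤ j → f i ≤ f j) : ∑ j, kfun r f j = n := by
  rw [← suf_zero, suf_kfun f hc (r+1) 0 (by omega), bfun_zero]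

end Decomp


section Glue

variable {r n : ℕ} (k : Fin (r+1) → ℕ)

/-- `x` lies in segment `t`. -/
def inSeg (t : Fin (r+1)) (x : Fin (n+1)) : Prop :=
  suf r k (t.val+1) ≤ x.val ∧ x.val < suf r k t.val

lemma kpos {t : Fin (r+1)} {x : Fin (n+1)} (hx : inSeg k t x) : 0 < k t := by
  have h := suf_succ k t.val t.isLt
  rw [Fin.eta] at h
  obtain ⟨h1, h2⟩ := hx
  omega

lemma loc_lt {t : Fin (r+1)} {x : Fin (n+1)} (hx : inSeg k t x) :
    x.val - suf r k (t.val+1) < k t := by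
  have h := suf_succ k t.val t.isLt
  rw [Fin.eta] at h
  obtain ⟨h1, h2⟩ := hx
  omega

/-- Local coordinate of `x` within segment `t`. -/
def loc (t : Fin (r+1)) (x : Fin (n+1)) (hx : inSeg k t x) : Fin (k t) :=
  ⟨x.val - suf r k (t.val+1), loc_lt k hx⟩

lemma inSeg_lt_n {t : Fin (r+1)} {x : Fin (n+1)} (hn : suf r k 0 ≤ n) (hx : inSeg k t x) :
    x.val < n := by
  have h := suf_anti k (Nat.zero_le t.val)
  obtain ⟨h1, h2⟩ := hx
  omega

lemma seg_unique {t t' : Fin (r+1)} {x : Fin (n+1)} (hx : inSeg k t x) (hx' : inSeg k t' x) :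
    t = t' := by
  by_contra hne
  rcases Nat.lt_or_ge t.val t'.val with h | h
  · have := suf_anti k (show t.val + 1 ≤ t'.val by omega)
    obtain ⟨h1, h2⟩ := hx; obtain ⟨h1', h2'⟩ := hx'
    omega
  · rcases Nat.lt_or_ge t'.val t.val with h' | h'
    · have := suf_anti k (show t'.val + 1 ≤ t.val by omega)
      obtain ⟨h1, h2⟩ := hx; obtain ⟨h1', h2'⟩ := hx'
      omega
    · exact hne (Fin.ext (by omega))

lemma seg_exists (hkn : suf r k 0 = n) (x : Fin (n+1)) (hx : x.val < n) :
    ∃ t : Fin (r+1), inSeg k t x := by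
  have hex : ∃ t, suf r k t ≤ x.val := ⟨r+1, by rw [suf_beyond k _ le_rfl]; omega⟩
  set t₀ := Nat.find hex with ht₀
  have hspec : suf r k t₀ ≤ x.val := Nat.find_spec hex
  have hpos : 1 ≤ t₀ := by
    rcases Nat.eq_zero_or_pos t₀ with h0 | h; · rw [h0, hkn] at hspec; omega
    · exact h
  have hle : t₀ ≤ r + 1 := Nat.find_le (by rw [suf_beyond k _ le_rfl]; omega)
  refine ⟨⟨t₀ - 1, by omega⟩, ?_, ?_⟩
  · show suf r k (t₀ - 1 + 1) ≤ x.val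
    rw [show t₀ - 1 + 1 = t₀ by omega]
    exact hspec
  · show x.val < suf r k (t₀ - 1)
    by_contra hcon
    exact Nat.find_min hex (show t₀ - 1 < t₀ by omega) (by omega)

/-- Embedding of segment `t` into the ambient. -/
def emb (hn : suf r k 0 ≤ n) (t : Fin (r+1)) (y : Fin (k t)) : Fin (n+1) :=
  ⟨suf r k (t.val+1) + y.val, by
    have h := suf_succ k t.val t.isLt
    rw [Fin.eta] at h
    have h2 := suf_anti k (Nat.zero_le t.val)
    have := y.isLt
    omega⟩

lemma emb_strictMono (hn : suf r k 0 ≤ n) (t : Fin (r+1)) : StrictMono (emb k hn t) := by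
  intro a b hab
  simp only [emb, Fin.lt_def] at *
  omega

lemma inSeg_emb (hn : suf r k 0 ≤ n) (t : Fin (r+1)) (y : Fin (k t)) :
    inSeg k t (emb k hn t y) := by
  constructor
  · show suf r k (t.val+1) ≤ suf r k (t.val+1) + y.val; omega
  · show suf r k (t.val+1) + y.val < suf r k t.val
    have h := suf_succ k t.val t.isLt
    rw [Fin.eta] at h
    have := y.isLt
    omega

lemma loc_emb (hn : suf r k 0 ≤ n) (t : Fin (r+1)) (y : Fin (k t))
    (h : inSeg k t (emb k hn t y)) : loc k t (emb k hn t y) h = y := by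
  apply Fin.ext
  show suf r k (t.val+1) + y.val - suf r k (t.val+1) = y.val
  omega

lemma emb_loc (hn : suf r k 0 ≤ n) {t : Fin (r+1)} {x : Fin (n+1)} (hx : inSeg k t x) :
    emb k hn t (loc k t x hx) = x := by
  apply Fin.ext
  show suf r k (t.val+1) + (x.val - suf r k (t.val+1)) = x.val
  obtain ⟨h1, h2⟩ := hx
  omega

variable (G : ∀ t : Fin (r+1), {g : Fin r → Setoid (Fin (k t)) // MCP r (k t) g})

/-- `x` is glued to the top element at level `i`. -/
def marked (i : Fin r) (x : Fin (n+1)) : Prop :=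
  x.val = n ∨ ∃ (t : Fin (r+1)) (hx : inSeg k t x),
    t.val ≤ i.val ∧ (G t).1 i (loc k t x hx) ⟨0, kpos k hx⟩

/-- The glued relation at level `i`. -/
def grel (i : Fin r) (x y : Fin (n+1)) : Prop :=
  (∃ (t : Fin (r+1)) (hx : inSeg k t x) (hy : inSeg k t y),
      (G t).1 i (loc k t x hx) (loc k t y hy))
    ∨ (marked k G i x ∧ marked k G i y)

lemma marked_last (i : Fin r) : marked k G i (Fin.last n) := Or.inl rfl

lemma marked_of_rel_marked (hkn : suf r k 0 = n) {i : Fin r} {t : Fin (r+1)}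
    {x y : Fin (n+1)} (hx : inSeg k t x) (hy : inSeg k t y)
    (hrel : (G t).1 i (loc k t x hx) (loc k t y hy)) (hmy : marked k G i y) :
    marked k G i x := by
  rcases hmy with hn' | ⟨t', hy', ht'i, h0⟩
  · exact absurd hn' (by have := inSeg_lt_n k (le_of_eq hkn) hy; omega)
  · have ht : t = t' := seg_unique k hy hy'
    subst ht
    exact Or.inr ⟨t, hx, ht'i, Setoid.trans' _ hrel h0⟩

lemma grel_equivalence (hkn : suf r k 0 = n) (i : Fin r) :
    Equivalence (grel (n := n) k G i) := by
  constructor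
  · intro x
    by_cases hx : x.val = n
    · exact Or.inr ⟨Or.inl hx, Or.inl hx⟩
    · obtain ⟨t, ht⟩ := seg_exists k hkn x (by have := x.isLt; omega)
      exact Or.inl ⟨t, ht, ht, Setoid.refl' _ _⟩
  · intro x y hxy
    rcases hxy with ⟨t, hx, hy, hrel⟩ | ⟨hmx, hmy⟩
    · exact Or.inl ⟨t, hy, hx, Setoid.symm' _ hrel⟩
    · exact Or.inr ⟨hmy, hmx⟩
  · intro x y z hxy hyz
    rcases hxy with ⟨t1, hx, hy, h1⟩ | ⟨hmx, hmy⟩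
    · rcases hyz with ⟨t2, hy2, hz, h2⟩ | ⟨hmy, hmz⟩
      · have ht : t1 = t2 := seg_unique k hy hy2
        subst ht
        exact Or.inl ⟨t1, hx, hz, Setoid.trans' _ h1 h2⟩
      · exact Or.inr ⟨marked_of_rel_marked k G hkn hx hy h1 hmy, hmz⟩
    · rcases hyz with ⟨t2, hy2, hz, h2⟩ | ⟨hmy2, hmz⟩
      · exact Or.inr ⟨hmx, marked_of_rel_marked k G hkn hz hy2 (Setoid.symm' _ h2) hmy⟩
      · exact Or.inr ⟨hmx, hmz⟩

/-- The glued setoid at level `i`. -/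
def glueS (hkn : suf r k 0 = n) (i : Fin r) : Setoid (Fin (n+1)) :=
  ⟨grel k G i, grel_equivalence (n := n) k G hkn i⟩

lemma glue_chain (hkn : suf r k 0 = n) (i j : Fin r) (hij : i ≤ j) :
    glueS k G hkn i ≤ glueS k G hkn j := by
  have hmono : ∀ x : Fin (n+1), marked k G i x → marked k G j x := by
    intro x hm
    rcases hm with h | ⟨t, hx, hti, h0⟩
    · exact Or.inl h
    · exact Or.inr ⟨t, hx, le_trans hti hij, (G t).2.2 i j hij h0⟩
  intro x y hxy
  rcases hxy with ⟨t, hx, hy, hrel⟩ | ⟨hmx, hmy⟩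
  · exact Or.inl ⟨t, hx, hy, (G t).2.2 i j hij hrel⟩
  · exact Or.inr ⟨hmono x hmx, hmono y hmy⟩

lemma glue_noncross (hkn : suf r k 0 = n) (i : Fin r) : Noncross (glueS k G hkn i) := by
  intro a b c d hab hbc hcd h1 h2
  rw [Fin.lt_def] at hab hbc hcd
  rcases h1 with ⟨t, ha, hc, hac⟩ | ⟨hma, hmc⟩
  · -- a, c in segment t
    rcases h2 with ⟨t2, hb, hd, hbd⟩ | ⟨hmb, hmd⟩
    · -- all four in one segment
      have hbt : inSeg k t b := ⟨le_trans ha.1 (by omega), by have := hc.2; omega⟩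
      have ht : t = t2 := seg_unique k hbt hb
      subst ht
      have hla : (loc k t a ha).val < (loc k t b hbt).val := by
        show a.val - _ < b.val - _
        have := ha.1; omega
      have hlb : (loc k t b hbt).val < (loc k t c hc).val := by
        show b.val - _ < c.val - _
        have := hbt.1; omega
      have hld : (loc k t c hc).val < (loc k t d hd).val := by
        show c.val - _ < d.val - _
        have := hc.1; omega
      exact Or.inl ⟨t, ha, hbt,
        (G t).2.1 i _ _ _ _ hla hlb hld hac hbd⟩
    · -- b, d marked; a, c in segment t
      have hbt : inSeg k t b := ⟨le_trans ha.1 (by omega), by have := hc.2; omega⟩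
      rcases hmb with hbn | ⟨t', hb', ht'i, h0⟩
      · exact absurd hbn (by have := inSeg_lt_n k (le_of_eq hkn) hbt; omega)
      have ht : t = t' := seg_unique k hbt hb'
      subst ht
      -- h0 : G t i (loc b) 0, hac : G t i (loc a) (loc c)
      by_cases hla0 : (loc k t a ha).val = 0
      · -- a is the base point of the segment: a related to b directly
        have h0' : (G t).1 i (loc k t a ha) (loc k t b hbt) := by
          have hz : loc k t a ha = ⟨0, kpos k hbt⟩ := Fin.ext hla0
          rw [hz]
          exact Setoid.symm' _ h0
        exact Or.inl ⟨t, ha, hbt, h0'⟩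
      · have hla : (⟨0, kpos k ha⟩ : Fin (k t)).val < (loc k t a ha).val := by
          show (0:ℕ) < _; omega
        have hlab : (loc k t a ha).val < (loc k t b hbt).val := by
          show a.val - _ < b.val - _
          have := ha.1; omega
        have hlbc : (loc k t b hbt).val < (loc k t c hc).val := by
          show b.val - _ < c.val - _
          have := hbt.1; omega
        have h0a : (G t).1 i ⟨0, kpos k ha⟩ (loc k t a ha) :=
          (G t).2.1 i _ _ _ _ hla hlab hlbc (Setoid.symm' _ h0) hac
        exact Or.inr ⟨Or.inr ⟨t, ha, ht'i, Setoid.symm' _ h0a⟩,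
          Or.inr ⟨t, hbt, ht'i, h0⟩⟩
  · -- a, c marked
    rcases h2 with ⟨t, hb, hd, hbd⟩ | ⟨hmb, hmd⟩
    · -- b, d in segment t; c between
      have hct : inSeg k t c := ⟨le_trans hb.1 (by omega), by have := hd.2; omega⟩
      rcases hmc with hcn | ⟨t', hc', ht'i, h0⟩
      · exact absurd hcn (by have := inSeg_lt_n k (le_of_eq hkn) hct; omega)
      have ht : t = t' := seg_unique k hct hc'
      subst ht
      by_cases hlb0 : (loc k t b hb).val = 0
      · -- b is base point: b marked
        have hmb : marked k G i b := Or.inr ⟨t, hb, ht'i, by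
          have hz : loc k t b hb = ⟨0, kpos k hb⟩ := Fin.ext hlb0
          rw [hz]⟩
        exact Or.inr ⟨hma, hmb⟩
      · have h0b : (⟨0, kpos k hb⟩ : Fin (k t)).val < (loc k t b hb).val := by
          show (0:ℕ) < _; omega
        have hlbc : (loc k t b hb).val < (loc k t c hct).val := by
          show b.val - _ < c.val - _
          have := hb.1; omega
        have hlcd : (loc k t c hct).val < (loc k t d hd).val := by
          show c.val - _ < d.val - _
          have := hct.1; omega
        have h0b' : (G t).1 i ⟨0, kpos k hb⟩ (loc k t b hb) :=
          (G t).2.1 i _ _ _ _ h0b hlbc hlcd (Setoid.symm' _ h0) hbd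
        exact Or.inr ⟨hma, Or.inr ⟨t, hb, ht'i, Setoid.symm' _ h0b'⟩⟩
    · exact Or.inr ⟨hma, hmb⟩

end Glue

section Fiber

variable {r n : ℕ}

/-- Restriction of a chain to segment `t`. -/
def restr (k : Fin (r+1) → ℕ) (hn : suf r k 0 ≤ n) (f : Fin r → Setoid (Fin (n+1)))
    (t : Fin (r+1)) : Fin r → Setoid (Fin (k t)) :=
  fun i => Setoid.comap (emb k hn t) (f i)

lemma restr_MCP (k : Fin (r+1) → ℕ) (hn : suf r k 0 ≤ n) {f : Fin r → Setoid (Fin (n+1))}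
    (hf : MCP r (n+1) f) (t : Fin (r+1)) : MCP r (k t) (restr k hn f t) :=
  ⟨fun i => noncross_comap (emb_strictMono k hn t) (hf.1 i),
   fun i j hij => le_comap (hf.2 i j hij)⟩

variable {f : Fin r → Setoid (Fin (n+1))} {k : Fin (r+1) → ℕ}

lemma suf_eq_bfun (hf : MCP r (n+1) f) (hk : kfun r f = k) (t : ℕ) :
    suf r k t = bfun r f t := by
  subst hk
  rcases le_or_gt t (r+1) with h | h
  · exact suf_kfun f hf.2 (r+1-t) t (by omega)
  · rw [suf_beyond _ _ (by omega), bfun_beyond _ _ (by omega)]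

lemma hkn_of_kfun (hf : MCP r (n+1) f) (hk : kfun r f = k) : suf r k 0 = n := by
  rw [suf_eq_bfun hf hk 0, bfun_zero]

/-- L1: segment base points are in the class of the top element. -/
lemma base_rel_last (hf : MCP r (n+1) f) (hk : kfun r f = k) (tv : ℕ) (htv : tv < r)
    (i : Fin r) (hti : tv ≤ i.val) (hb : suf r k (tv+1) < n + 1) :
    f i ⟨suf r k (tv+1), hb⟩ (Fin.last n) := by
  have h1 : suf r k (tv+1) = mrep n (f ⟨tv, htv⟩) := by
    rw [suf_eq_bfun hf hk, bfun_eq_mrep f (tv+1) (by omega) (by omega)]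
    simp only [Nat.add_sub_cancel]
  have h2 := mrep_rel (f ⟨tv, htv⟩)
  have h3 : f ⟨tv, htv⟩ ≤ f i := hf.2 _ _ (by rw [Fin.le_def]; exact hti)
  have h4 : (⟨suf r k (tv+1), hb⟩ : Fin (n+1)) = ⟨mrep n (f ⟨tv, htv⟩), mrep_lt _⟩ :=
    Fin.ext h1
  rw [h4]
  exact h3 h2

/-- L2: elements of the class of the top element lie above the boundary. -/
lemma rel_last_ge (hf : MCP r (n+1) f) (hk : kfun r f = k) (i : Fin r) (x : Fin (n+1))
    (hx : f i x (Fin.last n)) : suf r k (i.val+1) ≤ x.val := by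
  have h1 : suf r k (i.val+1) = mrep n (f ⟨i.val, i.isLt⟩) := by
    rw [suf_eq_bfun hf hk, bfun_eq_mrep f (i.val+1) (by omega) (by simpa using i.isLt)]
    simp only [Nat.add_sub_cancel]
  rw [h1]
  exact mrep_min (by convert hx)

/-- L3: separation — classes do not cross segment boundaries, away from the top class. -/
lemma separation (hf : MCP r (n+1) f) (hk : kfun r f = k) {i : Fin r} {x y : Fin (n+1)}
    (hxy : f i x y) (hlt : x.val < y.val) (hnl : ¬ f i x (Fin.last n))
    {t : Fin (r+1)} (hxt : inSeg k t x) : inSeg k t y := by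
  have hkn : suf r k 0 = n := hkn_of_kfun hf hk
  have hyn : y.val < n := by
    rcases Nat.lt_or_ge y.val n with h | h
    · exact h
    · exfalso
      have hy : y = Fin.last n := Fin.ext (by have := y.isLt; simp only [Fin.val_last]; omega)
      rw [hy] at hxy
      exact hnl hxy
  obtain ⟨ty, hyt⟩ := seg_exists k hkn y hyn
  have hteq : t = ty := by
    by_contra hne
    rcases Nat.lt_or_ge t.val ty.val with hlt2 | hge
    · have := suf_anti k (show t.val + 1 ≤ ty.val by omega)
      obtain ⟨a1, a2⟩ := hxt; obtain ⟨b1, b2⟩ := hyt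
      omega
    · have hty : ty.val < t.val := by
        rcases Nat.lt_or_ge ty.val t.val with h | h
        · exact h
        · exact absurd (Fin.ext (by omega : t.val = ty.val)) hne
      have hxβ : x.val < suf r k t.val := hxt.2
      have hβy : suf r k t.val ≤ y.val :=
        le_trans (suf_anti k (show ty.val + 1 ≤ t.val by omega)) hyt.1
      have hβn : suf r k t.val < n + 1 := by
        have := suf_anti k (Nat.zero_le t.val); omega
      have htpos : 1 ≤ t.val := by omega
      have hℓ : t.val - 1 < r := by have := t.isLt; omega
      have hsufeq : suf r k (t.val - 1 + 1) = suf r k t.val := by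
        rw [show t.val - 1 + 1 = t.val by omega]
      have hb2 : suf r k (t.val - 1 + 1) < n + 1 := by rw [hsufeq]; exact hβn
      have hfin : ∀ h', (⟨suf r k (t.val - 1 + 1), h'⟩ : Fin (n+1)) = ⟨suf r k t.val, hβn⟩ :=
        fun h' => Fin.ext hsufeq
      -- a helper that derives a contradiction from f L x last, for L = i or L = level of β
      have key : ∀ L : Fin r, f L x y → f L ⟨suf r k t.val, hβn⟩ (Fin.last n) →
          f L x (Fin.last n) := by
        intro L hxyL hβrel
        rcases Nat.eq_or_lt_of_le hβy with heq | hstrict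
        · have : (⟨suf r k t.val, hβn⟩ : Fin (n+1)) = y := Fin.ext heq
          rw [this] at hβrel
          exact Setoid.trans' _ hxyL hβrel
        · have hcross := hf.1 L x ⟨suf r k t.val, hβn⟩ y (Fin.last n)
            (by rw [Fin.lt_def]; exact hxβ) (by rw [Fin.lt_def]; exact hstrict)
            (by rw [Fin.lt_def]; simp only [Fin.val_last]; exact hyn)
            hxyL hβrel
          exact Setoid.trans' _ hcross hβrel
      rcases Nat.lt_or_ge i.val (t.val - 1) with hcase | hcase
      · -- level of the boundary is above i : contradiction via minimality at that level
        have hβrel := base_rel_last hf hk (t.val - 1) hℓ ⟨t.val - 1, hℓ⟩ le_rfl hb2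
        rw [hfin hb2] at hβrel
        have hxyL : f ⟨t.val - 1, hℓ⟩ x y :=
          hf.2 i ⟨t.val - 1, hℓ⟩ (by rw [Fin.le_def]; show i.val ≤ t.val - 1; omega) hxy
        have hxl := key ⟨t.val - 1, hℓ⟩ hxyL hβrel
        have hge2 := rel_last_ge hf hk ⟨t.val - 1, hℓ⟩ x hxl
        -- suf r k ((t.val-1)+1) ≤ x.val, i.e. suf r k t.val ≤ x.val; contradiction
        rw [show (⟨t.val - 1, hℓ⟩ : Fin r).val + 1 = t.val by show t.val - 1 + 1 = t.val; omega]
          at hge2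
        omega
      · -- boundary level ≤ i : contradiction with hnl
        have hβrel := base_rel_last hf hk (t.val - 1) hℓ i (by omega) hb2
        rw [hfin hb2] at hβrel
        exact absurd (key i hxy hβrel) hnl
  subst hteq
  exact hyt

variable (k) in
/-- The restricted chains, packaged. -/
def resG (hn : suf r k 0 ≤ n) (f : Fin r → Setoid (Fin (n+1))) (hf : MCP r (n+1) f) :
    ∀ t : Fin (r+1), {g : Fin r → Setoid (Fin (k t)) // MCP r (k t) g} :=
  fun t => ⟨restr k hn f t, restr_MCP k hn hf t⟩

/-- (R1, part 1): boundaries of a glued chain recover the suffix sums. -/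
lemma bfun_glue (G : ∀ t : Fin (r+1), {g : Fin r → Setoid (Fin (k t)) // MCP r (k t) g})
    (hkn : suf r k 0 = n) :
    ∀ m, m ≤ r + 1 → bfun r (fun i => glueS k G hkn i) m = suf r k m := by
  intro m hm
  rcases Nat.eq_zero_or_pos m with h0 | hpos
  · subst h0; rw [bfun_zero, hkn]
  rcases Nat.lt_or_ge (m-1) r with hmr | hmr
  swap
  · rw [bfun_beyond _ _ (by omega), suf_beyond _ _ (by omega)]
  rw [bfun_eq_mrep _ m (by omega) hmr]
  have hsm : suf r k m ≤ n := by have := suf_anti k (Nat.zero_le m); omega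
  -- membership: the boundary value is glued to the top element
  have hmem : suf r k m ∈ lastClass n (glueS k G hkn ⟨m-1, hmr⟩) := by
    refine ⟨by omega, ?_⟩
    show grel k G ⟨m-1, hmr⟩ ⟨suf r k m, by omega⟩ (Fin.last n)
    rcases Nat.eq_or_lt_of_le hsm with heq | hlt
    · have : (⟨suf r k m, by omega⟩ : Fin (n+1)) = Fin.last n := Fin.ext (by simpa using heq)
      rw [this]
      exact (grel_equivalence k G hkn _).refl _
    · obtain ⟨t₀, hz⟩ := seg_exists k hkn ⟨suf r k m, by omega⟩ hlt
      have hz1 : suf r k (t₀.val + 1) ≤ suf r k m := hz.1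
      have hz2 : suf r k m < suf r k t₀.val := hz.2
      have ht₀ : t₀.val < m := by
        by_contra hcon
        have := suf_anti k (show m ≤ t₀.val by omega)
        omega
      have hloc0 : (loc k t₀ ⟨suf r k m, by omega⟩ hz).val = 0 := by
        show suf r k m - suf r k (t₀.val + 1) = 0
        have := suf_anti k (show t₀.val + 1 ≤ m by omega)
        omega
      refine Or.inr ⟨Or.inr ⟨t₀, hz, by show t₀.val ≤ m - 1; omega, ?_⟩, marked_last k G _⟩
      have : loc k t₀ ⟨suf r k m, by omega⟩ hz = ⟨0, kpos k hz⟩ := Fin.ext hloc0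
      rw [this]
  -- lower bound: anything glued to the top element is at least the boundary
  have hlb : suf r k m ≤ mrep n (glueS k G hkn ⟨m-1, hmr⟩) := by
    obtain ⟨hlt, hrel⟩ := mrep_mem (glueS k G hkn ⟨m-1, hmr⟩)
    have hrel' : grel k G ⟨m-1, hmr⟩ ⟨mrep n (glueS k G hkn ⟨m-1, hmr⟩), hlt⟩ (Fin.last n) := hrel
    rcases hrel' with ⟨t, hx, hy, _⟩ | ⟨hmv, _⟩
    · exfalso
      have h1 : (Fin.last n).val < suf r k t.val := hy.2
      have h2 := suf_anti k (Nat.zero_le t.val)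
      simp only [Fin.val_last] at h1
      omega
    · rcases hmv with hvn | ⟨t', hv, ht', _⟩
      · have hvn' : mrep n (glueS k G hkn ⟨m-1, hmr⟩) = n := hvn
        omega
      · have ht'' : t'.val ≤ m - 1 := ht'
        have h1 : suf r k m ≤ suf r k (t'.val + 1) := suf_anti k (by omega)
        have h2 : suf r k (t'.val + 1) ≤ mrep n (glueS k G hkn ⟨m-1, hmr⟩) := hv.1
        omega
  exact le_antisymm (Nat.sInf_le hmem) hlb

/-- (R1): the composition of a glued chain is `k`. -/
lemma kfun_glue (G : ∀ t : Fin (r+1), {g : Fin r → Setoid (Fin (k t)) // MCP r (k t) g})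
    (hkn : suf r k 0 = n) : kfun r (fun i => glueS k G hkn i) = k := by
  funext t
  show bfun r _ t.val - bfun r _ (t.val + 1) = k t
  rw [bfun_glue G hkn t.val (by omega), bfun_glue G hkn (t.val+1) (by omega)]
  have h := suf_succ k t.val t.isLt
  rw [Fin.eta] at h
  omega

/-- (R2): restricting a glued chain recovers the pieces. -/
lemma restr_glue (G : ∀ t : Fin (r+1), {g : Fin r → Setoid (Fin (k t)) // MCP r (k t) g})
    (hkn : suf r k 0 = n) (t : Fin (r+1)) (i : Fin r) :
    restr k (le_of_eq hkn) (fun i => glueS k G hkn i) t i = (G t).1 i := by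
  have hn : suf r k 0 ≤ n := le_of_eq hkn
  apply Setoid.ext
  intro u v
  constructor
  · intro h
    have h' : grel k G i (emb k hn t u) (emb k hn t v) := h
    rcases h' with ⟨t', h1, h2, hG⟩ | ⟨m1, m2⟩
    · have ht : t' = t := seg_unique k h1 (inSeg_emb k hn t u)
      subst ht
      rw [loc_emb k hn t' u h1, loc_emb k hn t' v h2] at hG
      exact hG
    · have hrel0 : ∀ w : Fin (k t), marked k G i (emb k hn t w) →
          (G t).1 i w ⟨0, kpos k (inSeg_emb k hn t w)⟩ := by
        intro w hm
        rcases hm with hwn | ⟨t1, h1, ht1, h0⟩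
        · exfalso
          have h1 : (emb k hn t w).val < suf r k t.val := (inSeg_emb k hn t w).2
          have h2 := suf_anti k (Nat.zero_le t.val)
          omega
        · have ht : t1 = t := seg_unique k h1 (inSeg_emb k hn t w)
          subst ht
          rw [loc_emb k hn t1 w h1] at h0
          exact h0
      exact Setoid.trans' _ (hrel0 u m1) (Setoid.symm' _ (hrel0 v m2))
  · intro h
    show grel k G i (emb k hn t u) (emb k hn t v)
    refine Or.inl ⟨t, inSeg_emb k hn t u, inSeg_emb k hn t v, ?_⟩
    rw [loc_emb k hn t u _, loc_emb k hn t v _]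
    exact h

variable {f : Fin r → Setoid (Fin (n+1))} {k : Fin (r+1) → ℕ}

/-- marked elements (w.r.t. restricted chains) are in the top class. -/
lemma marked_rel_last (hf : MCP r (n+1) f) (hk : kfun r f = k) (hn : suf r k 0 ≤ n) (i : Fin r)
    (u : Fin (n+1)) (hm : marked k (resG k hn f hf) i u) : f i u (Fin.last n) := by
  rcases hm with hun | ⟨t, hu, hti, h0⟩
  · have : u = Fin.last n := Fin.ext (by simpa using hun)
    rw [this]
  · have h0' : f i (emb k hn t (loc k t u hu)) (emb k hn t ⟨0, kpos k hu⟩) := h0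
    rw [emb_loc k hn hu] at h0'
    have hbv : (emb k hn t ⟨0, kpos k hu⟩).val = suf r k (t.val+1) := by
      show suf r k (t.val+1) + 0 = suf r k (t.val+1); omega
    have hb : suf r k (t.val+1) < n + 1 := by
      have := (emb k hn t ⟨0, kpos k hu⟩).isLt; omega
    have hbase := base_rel_last hf hk t.val (by omega) i hti hb
    have : emb k hn t ⟨0, kpos k hu⟩ = ⟨suf r k (t.val+1), hb⟩ := Fin.ext hbv
    rw [this] at h0'
    exact Setoid.trans' _ h0' hbase

/-- elements of the top class are marked (w.r.t. restricted chains). -/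
lemma rel_last_marked (hf : MCP r (n+1) f) (hk : kfun r f = k) (hn : suf r k 0 ≤ n) (i : Fin r)
    (u : Fin (n+1)) (hu : f i u (Fin.last n)) : marked k (resG k hn f hf) i u := by
  rcases Nat.eq_or_lt_of_le (show u.val ≤ n by have := u.isLt; omega) with hun | hlt
  · exact Or.inl hun
  · have hkn : suf r k 0 = n := hkn_of_kfun hf hk
    obtain ⟨t₀, hz⟩ := seg_exists k hkn u hlt
    have hge := rel_last_ge hf hk i u hu
    have ht₀ : t₀.val ≤ i.val := by
      by_contra hcon
      have := suf_anti k (show i.val + 1 ≤ t₀.val by omega)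
      exact absurd hz.2 (by omega)
    refine Or.inr ⟨t₀, hz, ht₀, ?_⟩
    show f i (emb k hn t₀ (loc k t₀ u hz)) (emb k hn t₀ ⟨0, kpos k hz⟩)
    rw [emb_loc k hn hz]
    have hbv : (emb k hn t₀ ⟨0, kpos k hz⟩).val = suf r k (t₀.val+1) := by
      show suf r k (t₀.val+1) + 0 = suf r k (t₀.val+1); omega
    have hb : suf r k (t₀.val+1) < n + 1 := by
      have := (emb k hn t₀ ⟨0, kpos k hz⟩).isLt; omega
    have hbase := base_rel_last hf hk t₀.val (by omega) i ht₀ hb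
    have heq : emb k hn t₀ ⟨0, kpos k hz⟩ = ⟨suf r k (t₀.val+1), hb⟩ := Fin.ext hbv
    rw [heq]
    exact Setoid.trans' _ hu (Setoid.symm' _ hbase)

/-- (R3): gluing the restrictions recovers the chain. -/
lemma glue_restr (hf : MCP r (n+1) f) (hk : kfun r f = k) (hkn : suf r k 0 = n) (i : Fin r) :
    glueS k (resG k (le_of_eq hkn) f hf) hkn i = f i := by
  have hn : suf r k 0 ≤ n := le_of_eq hkn
  apply Setoid.ext
  intro x y
  constructor
  · intro h
    have h' : grel k (resG k hn f hf) i x y := h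
    rcases h' with ⟨t, hx, hy, hG⟩ | ⟨mx, my⟩
    · have hG' : f i (emb k hn t (loc k t x hx)) (emb k hn t (loc k t y hy)) := hG
      rw [emb_loc k hn hx, emb_loc k hn hy] at hG'
      exact hG'
    · exact Setoid.trans' _ (marked_rel_last hf hk hn i x mx)
        (Setoid.symm' _ (marked_rel_last hf hk hn i y my))
  · intro hxy
    show grel k (resG k hn f hf) i x y
    by_cases hlx : f i x (Fin.last n)
    · exact Or.inr ⟨rel_last_marked hf hk hn i x hlx,
        rel_last_marked hf hk hn i y (Setoid.trans' _ (Setoid.symm' _ hxy) hlx)⟩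
    · have key : ∀ a b : Fin (n+1), f i a b → a.val < b.val → ¬ f i a (Fin.last n) →
          grel k (resG k hn f hf) i a b := by
        intro a b hab hlt hnl
        have han : a.val < n := by
          rcases Nat.lt_or_ge a.val n with h | h
          · exact h
          · exfalso
            have : a = Fin.last n := Fin.ext (by have := a.isLt; simp only [Fin.val_last]; omega)
            rw [this] at hnl
            exact hnl (Setoid.refl' _ _)
      
        obtain ⟨t, hat⟩ := seg_exists k hkn a han
        have hbt := separation hf hk hab hlt hnl hat
        refine Or.inl ⟨t, hat, hbt, ?_⟩
        show f i (emb k hn t (loc k t a hat)) (emb k hn t (loc k t b hbt))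
        rw [emb_loc k hn hat, emb_loc k hn hbt]
        exact hab
      rcases lt_trichotomy x.val y.val with hlt | heq | hgt
      · exact key x y hxy hlt hlx
      · have : x = y := Fin.ext heq
        rw [this]
        exact (grel_equivalence k (resG k hn f hf) hkn i).refl y
      · have hly : ¬ f i y (Fin.last n) := fun hly => hlx (Setoid.trans' _ hxy hly)
        exact (grel_equivalence k (resG k hn f hf) hkn i).symm
          (key y x (Setoid.symm' _ hxy) hgt hly)

variable (k) in
/-- The fiber of the boundary map is a product of smaller multichain spaces. -/
noncomputable def fibEquiv (hkn : suf r k 0 = n) :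
    {F : {f : Fin r → Setoid (Fin (n+1)) // MCP r (n+1) f} // kfun r F.1 = k} ≃
      (∀ t : Fin (r+1), {g : Fin r → Setoid (Fin (k t)) // MCP r (k t) g}) where
  toFun F := resG k (le_of_eq hkn) F.1.1 F.1.2
  invFun G := ⟨⟨fun i => glueS k G hkn i,
      ⟨fun i => glue_noncross k G hkn i, fun i j hij => glue_chain k G hkn i j hij⟩⟩,
    kfun_glue G hkn⟩
  left_inv F := by
    apply Subtype.ext; apply Subtype.ext
    funext i
    exact glue_restr F.1.2 F.2 hkn i
  right_inv G := by
    funext t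
    apply Subtype.ext
    funext i
    exact restr_glue G hkn t i

end Fiber

set_option maxHeartbeats 1000000 in
lemma card_step (r n : ℕ) :
    Nat.card {f : Fin r → Setoid (Fin (n+1)) // MCP r (n+1) f}
      = ∑ k ∈ Finset.Nat.antidiagonalTuple (r+1) n,
          ∏ t, Nat.card {g : Fin r → Setoid (Fin (k t)) // MCP r (k t) g} := by
  classical
  letI : Fintype {f : Fin r → Setoid (Fin (n+1)) // MCP r (n+1) f} := Fintype.ofFinite _
  rw [Nat.card_eq_fintype_card, ← Finset.card_univ]
  rw [Finset.card_eq_sum_card_fiberwise (f := fun F => kfun r F.1)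
      (t := Finset.Nat.antidiagonalTuple (r+1) n)
      (fun F _ => Finset.Nat.mem_antidiagonalTuple.mpr (ksum F.1 F.2.2))]
  apply Finset.sum_congr rfl
  intro k hk
  have hkn : suf r k 0 = n := by
    rw [suf_zero]; exact Finset.Nat.mem_antidiagonalTuple.mp hk
  have h1 : (Finset.univ.filter fun F : {f : Fin r → Setoid (Fin (n+1)) // MCP r (n+1) f} =>
      kfun r F.1 = k).card
      = Fintype.card {F : {f : Fin r → Setoid (Fin (n+1)) // MCP r (n+1) f} // kfun r F.1 = k} :=
    (Fintype.card_subtype _).symm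
  rw [h1, ← Nat.card_eq_fintype_card, Nat.card_congr (fibEquiv k hkn), Nat.card_pi]

lemma card_zero (r : ℕ) : Nat.card {f : Fin r → Setoid (Fin 0) // MCP r 0 f} = 1 := by
  letI : Subsingleton (Setoid (Fin 0)) := ⟨fun a b => Setoid.ext fun x => x.elim0⟩
  have hfun : ∀ f g : Fin r → Setoid (Fin 0), f = g := fun f g =>
    funext fun i => Subsingleton.elim _ _
  have e0 : Setoid (Fin 0) := ⟨fun _ _ => True,
    ⟨fun _ => trivial, fun _ => trivial, fun _ _ => trivial⟩⟩
  have hMCP : MCP r 0 (fun _ => e0) :=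
    ⟨fun i x => x.elim0, fun i j hij => by
      have : (fun _ : Fin r => e0) i = (fun _ : Fin r => e0) j := rfl
      exact le_of_eq this⟩
  letI : Unique {f : Fin r → Setoid (Fin 0) // MCP r 0 f} :=
    { default := ⟨fun _ => e0, hMCP⟩
      uniq := fun a => Subtype.ext (hfun _ _) }
  exact Nat.card_unique

lemma card_A (r : ℕ) : ∀ n : ℕ,
    (Nat.card {f : Fin r → Setoid (Fin n) // MCP r n f} : ℤ) = A r n 1 := by
  intro n
  induction n using Nat.strong_induction_on with
  | _ n ih =>
    cases n with
    | zero =>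
      rw [card_zero]
      rfl
    | succ n' =>
      rw [card_step]
      push_cast
      have hsum : ∀ k ∈ Finset.Nat.antidiagonalTuple (r+1) n',
          (∏ t, (Nat.card {g : Fin r → Setoid (Fin (k t)) // MCP r (k t) g} : ℤ))
            = ∏ t, A r (k t) 1 := by
        intro k hk
        apply Finset.prod_congr rfl
        intro t _
        have hle : k t ≤ n' := by
          have := Finset.Nat.mem_antidiagonalTuple.mp hk
          calc k t ≤ ∑ j, k j := Finset.single_le_sum (fun j _ => Nat.zero_le _) (Finset.mem_univ t)
            _ = n' := this
        exact ih (k t) (by omega)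
      rw [Finset.sum_congr rfl hsum, convTuple, ← A_shift]

end NCWork

/-- For each `r ≥ 1`, the number of weakly increasing `r`-chains `π₁ ≤ π₂ ≤ ⋯ ≤ π_r`
in the refinement lattice of non-crossing partitions of `[n]` equals the Fuss–Catalan
number `(1/(rn+1)) * C((r+1)n, n)`. -/
theorem card_increasing_chains_noncrossing (r n : ℕ) (hr : 1 ≤ r) :
    Nat.card {f : Fin r → Setoid (Fin n) //
        (∀ i, Noncross (f i)) ∧ ∀ i j : Fin r, i ≤ j → f i ≤ f j} =
      Nat.choose ((r + 1) * n) n / (r * n + 1) := by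
  have h1 := NCWork.card_A r n
  have h2 := NCWork.A_closed r n
  have h3 : ((r*n+1 : ℕ) : ℤ) * (Nat.card {f : Fin r → Setoid (Fin n) // NCWork.MCP r n f} : ℤ)
      = (((r+1)*n).choose n : ℤ) := by rw [h1]; exact h2
  have h4 : Nat.choose ((r+1)*n) n
      = Nat.card {f : Fin r → Setoid (Fin n) // NCWork.MCP r n f} * (r*n+1) := by
    exact_mod_cast (by push_cast at h3; linarith [h3] : (((r+1)*n).choose n : ℤ)
      = (Nat.card {f : Fin r → Setoid (Fin n) // NCWork.MCP r n f} : ℤ) * (r*n+1))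
  show Nat.card {f : Fin r → Setoid (Fin n) // NCWork.MCP r n f} = _
  rw [Nat.div_eq_of_eq_mul_left (by omega) h4]
end

section
/- If π_1 ≤ π_2 ≤ ⋯ ≤ π_r is a weakly increasing chain of non-crossing partitions of [n], then the superposition of the chord diagrams Ψ(π_1),…,Ψ(π_r) (placing the s-th diagram's arches at the s-th sub-point of each bundled point) has pairwise non-crossing arches, i.e., gives a valid generalized chord diagram. -/
/-- The point `i` (unprimed) among the `2n` points `1, 1', 2, 2', …, n, n'`. -/
def upPt {n : ℕ} (i : Fin n) : Fin (2 * n) := ⟨2 * i.val, by have := i.isLt; omega⟩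

/-- The point `i'` (primed) among the `2n` points `1, 1', 2, 2', …, n, n'`. -/
def prPt {n : ℕ} (i : Fin n) : Fin (2 * n) := ⟨2 * i.val + 1, by have := i.isLt; omega⟩

/-- `j` is the cyclic successor of `i` inside its block of `π`. -/
def CycSucc {n : ℕ} (π : Setoid (Fin n)) (i j : Fin n) : Prop :=
  π i j ∧ ((j = i ∧ ∀ k, π i k → k = i) ∨
    (j ≠ i ∧ ∀ k, π i k → k ≠ i →
      (j.val + n - i.val) % n ≤ (k.val + n - i.val) % n))

/-- `M = Ψ(π)`: the chord diagram of `π`, with an arch from `i` to `(j-1)'` (mod `n`) for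
each cyclic successor pair `(i,j)` in a block of `π`. -/
def IsPsi {n : ℕ} [NeZero n] (π : Setoid (Fin n)) (M : Fin (2 * n) → Fin (2 * n)) : Prop :=
  ∀ i j : Fin n, M (upPt i) = prPt (j - 1) ↔ CycSucc π i j

/-- In the superposition, each of the `2n` points becomes a bundle of `r` points; the
`s`-th sub-point (0-based) from the left of the unprimed bundle `i`. -/
def bundleL (r : ℕ) {n : ℕ} (s : Fin r) (i : Fin n) : ℕ := 2 * r * i.val + s.val

/-- The `s`-th sub-point (0-based) from the right of the primed bundle `j'`. -/
def bundleR (r : ℕ) {n : ℕ} (s : Fin r) (j : Fin n) : ℕ := 2 * r * j.val + 2 * r - 1 - s.val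

/-- Two arches with endpoint pairs `{a,b}` and `{c,d}` cross iff their endpoints interleave. -/
def CrossPair (a b c d : ℕ) : Prop :=
  (min a b < min c d ∧ min c d < max a b ∧ max a b < max c d) ∨
  (min c d < min a b ∧ min a b < max c d ∧ max c d < max a b)

/- ### Auxiliary arithmetic lemmas -/

lemma SNC.mod2 (a n : ℕ) (h : a < n + n) :
    a % n = if a < n then a else a - n := by
  split
  · exact Nat.mod_eq_of_lt ‹_›
  · rw [Nat.mod_eq_sub_mod (by omega)]
    exact Nat.mod_eq_of_lt (by omega)

lemma SNC.dcoordIte {n : ℕ} (x y : ℕ) (hx : x < n) (hy : y < n) :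
    (x + n - y) % n = if y ≤ x then x - y else x + n - y := by
  rw [SNC.mod2 _ _ (by omega)]
  split <;> split <;> omega

lemma SNC.mono0 (r X : ℕ) : (X = 0 → 2*r*X = 0) ∧ (1 ≤ X → 2*r ≤ 2*r*X) := by
  constructor
  · intro h; simp [h]
  · intro h
    have h1 : 2*r*1 ≤ 2*r*X := Nat.mul_le_mul_left _ h
    have h2 : 2*r*1 = 2*r := by ring
    omega

lemma SNC.mono (r X Y : ℕ) :
    (X ≤ Y → 2*r*X ≤ 2*r*Y) ∧ (X+1 ≤ Y → 2*r*X + 2*r ≤ 2*r*Y) := by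
  constructor
  · exact fun h => Nat.mul_le_mul_left _ h
  · intro h
    have h1 : 2*r*(X+1) ≤ 2*r*Y := Nat.mul_le_mul_left _ h
    have h2 : 2*r*(X+1) = 2*r*X + 2*r := by ring
    omega

lemma SNC.rot_eq (m p x : ℕ) (hx : x < m) (hp : p < m) :
    (x + m - p) % m = if p ≤ x then x - p else x + m - p := by
  split
  · have h1 : x + m - p = (x - p) + m := by omega
    rw [h1, Nat.add_mod_right, Nat.mod_eq_of_lt (by omega)]
  · exact Nat.mod_eq_of_lt (by omega)

lemma SNC.cross_rot {m p a b c d : ℕ} (ha : a < m) (hb : b < m) (hc : c < m) (hd : d < m)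
    (hp : p < m) (h : CrossPair a b c d) :
    CrossPair ((a + m - p) % m) ((b + m - p) % m) ((c + m - p) % m) ((d + m - p) % m) := by
  rw [SNC.rot_eq m p a ha hp, SNC.rot_eq m p b hb hp, SNC.rot_eq m p c hc hp,
    SNC.rot_eq m p d hd hp]
  unfold CrossPair at h ⊢
  split_ifs <;> omega

lemma SNC.pt_lt {r n x c : ℕ} (hx : x < n) (hc : c < 2*r) : 2*r*x + c < 2*r*n := by
  have h1 : 2*r*(x+1) ≤ 2*r*n := Nat.mul_le_mul_left _ hx
  have h2 : 2*r*(x+1) = 2*r*x + 2*r := by ring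
  omega

lemma SNC.rot_pt (r n x i c : ℕ) (hx : x < n) (hi : i < n) (hc : c < 2*r) :
    (2*r*x + c + 2*r*n - 2*r*i) % (2*r*n) = 2*r*((x + n - i)%n) + c := by
  have h1 : 2*r*x + c + 2*r*n - 2*r*i = 2*r*(x+n-i) + c := by
    have h2 : 2*r*i ≤ 2*r*(x+n) := Nat.mul_le_mul_left _ (by omega)
    have h3 : 2*r*(x+n-i) = 2*r*(x+n) - 2*r*i := by rw [Nat.mul_sub]
    have h4 : 2*r*(x+n) = 2*r*x + 2*r*n := by ring
    omega
  rw [h1]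
  set y := x + n - i with hy
  have h5 := Nat.div_add_mod y n
  have h6 : 2*r*y + c = (2*r*n)*(y/n) + (2*r*(y%n) + c) := by
    nth_rewrite 1 [← h5]; ring
  rw [h6, Nat.mul_add_mod]
  exact Nat.mod_eq_of_lt (SNC.pt_lt (Nat.mod_lt y (by omega)) hc)

/- ### Cyclic coordinate lemmas -/

lemma SNC.coord_self {n : ℕ} (a : Fin n) : (a.val + n - a.val) % n = 0 := by
  rw [show a.val + n - a.val = n from by omega, Nat.mod_self]

lemma SNC.coord_inj {n : ℕ} (a x y : Fin n)
    (h : (x.val + n - a.val) % n = (y.val + n - a.val) % n) : x = y := by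
  have ha := a.isLt; have hx := x.isLt; have hy := y.isLt
  rw [SNC.dcoordIte x.val a.val hx ha, SNC.dcoordIte y.val a.val hy ha] at h
  apply Fin.val_inj.mp
  split_ifs at h <;> omega

lemma SNC.fin_succ_val {n : ℕ} [NeZero n] (b : Fin n) :
    ((b+1 : Fin n)).val = (b.val+1) % n := by
  rw [Fin.val_add, Fin.val_one', Nat.add_mod_mod]

lemma SNC.fin_succ_coord {n : ℕ} [NeZero n] (a b : Fin n)
    (h : (b.val + n - a.val) % n < n-1) :
    ((b+1 : Fin n).val + n - a.val) % n = (b.val + n - a.val) % n + 1 := by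
  have ha := a.isLt; have hb := b.isLt
  have hv : ((b+1 : Fin n)).val = (b.val+1) % n := SNC.fin_succ_val b
  have h1 := SNC.mod2 (b.val+1) n (by omega)
  have h2 := SNC.dcoordIte b.val a.val hb ha
  have h3 := SNC.dcoordIte ((b+1 : Fin n)).val a.val (b+1 : Fin n).isLt ha
  rw [hv] at h3 ⊢
  rw [h1] at h3 ⊢
  rw [h2] at h ⊢
  split_ifs at h3 h ⊢ <;> omega

lemma SNC.fin_succ_top {n : ℕ} [NeZero n] (a b : Fin n)
    (h : (b.val + n - a.val) % n = n-1) : (b+1 : Fin n) = a := by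
  have ha := a.isLt; have hb := b.isLt
  have hn : 0 < n := a.pos
  have hv : ((b+1 : Fin n)).val = (b.val+1) % n := SNC.fin_succ_val b
  have h1 := SNC.mod2 (b.val+1) n (by omega)
  have h2 := SNC.dcoordIte b.val a.val hb ha
  apply Fin.val_inj.mp
  rw [hv, h1]
  rw [h2] at h
  split_ifs at h ⊢ <;> omega

lemma SNC.rebase_le {n : ℕ} (a k x : Fin n)
    (h : (k.val + n - a.val) % n ≤ (x.val + n - a.val) % n) :
    (x.val + n - k.val) % n = (x.val + n - a.val) % n - (k.val + n - a.val) % n := by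
  have ha := a.isLt; have hk := k.isLt; have hx := x.isLt
  have c1 := SNC.dcoordIte k.val a.val hk ha
  have c2 := SNC.dcoordIte x.val a.val hx ha
  have c3 := SNC.dcoordIte x.val k.val hx hk
  rw [c1, c2] at h ⊢
  rw [c3]
  split_ifs at h ⊢ <;> omega

lemma SNC.rebase_gt {n : ℕ} (a k x : Fin n)
    (h : (x.val + n - a.val) % n < (k.val + n - a.val) % n) :
    (x.val + n - k.val) % n = (x.val + n - a.val) % n + n - (k.val + n - a.val) % n := by
  have ha := a.isLt; have hk := k.isLt; have hx := x.isLt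
  have c1 := SNC.dcoordIte k.val a.val hk ha
  have c2 := SNC.dcoordIte x.val a.val hx ha
  have c3 := SNC.dcoordIte x.val k.val hx hk
  rw [c1, c2] at h ⊢
  rw [c3]
  split_ifs at h ⊢ <;> omega

/-- Cyclic version of noncrossing: if the cyclic coordinates of `b,c,d` around `a`
are increasing (and positive), `σ a c` and `σ b d`, then `σ a b`. -/
lemma SNC.nc_cyc {n : ℕ} (σ : Setoid (Fin n)) (hσ : Noncross σ) (a b c d : Fin n)
    (h1 : 0 < (b.val + n - a.val) % n)
    (h2 : (b.val + n - a.val) % n < (c.val + n - a.val) % n)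
    (h3 : (c.val + n - a.val) % n < (d.val + n - a.val) % n)
    (hac : σ a c) (hbd : σ b d) : σ a b := by
  have ha := a.isLt; have hb := b.isLt; have hc := c.isLt; have hd := d.isLt
  rw [SNC.dcoordIte b.val a.val hb ha] at h1 h2
  rw [SNC.dcoordIte c.val a.val hc ha] at h2 h3
  rw [SNC.dcoordIte d.val a.val hd ha] at h3
  split_ifs at h1 h2 h3 with hab hacv hadv
  · -- a<b<c<d
    exact hσ a b c d (Fin.lt_def.mpr (by omega)) (Fin.lt_def.mpr (by omega))
      (Fin.lt_def.mpr (by omega)) hac hbd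
  · -- d<a<b<c
    have key := hσ d a b c (Fin.lt_def.mpr (by omega)) (Fin.lt_def.mpr (by omega))
      (Fin.lt_def.mpr (by omega)) (σ.iseqv.symm hbd) hac
    exact σ.iseqv.trans (σ.iseqv.symm key) (σ.iseqv.symm hbd)
  · omega
  · -- c<d<a<b
    have key := hσ c d a b (Fin.lt_def.mpr (by omega)) (Fin.lt_def.mpr (by omega))
      (Fin.lt_def.mpr (by omega)) (σ.iseqv.symm hac) (σ.iseqv.symm hbd)
    exact σ.iseqv.trans (σ.iseqv.trans hac key) (σ.iseqv.symm hbd)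
  · omega
  · omega
  · omega
  · -- b<c<d<a
    have key := hσ b c d a (Fin.lt_def.mpr (by omega)) (Fin.lt_def.mpr (by omega))
      (Fin.lt_def.mpr (by omega)) hbd (σ.iseqv.symm hac)
    exact σ.iseqv.trans hac (σ.iseqv.symm key)

set_option maxHeartbeats 1000000 in
/-- If `π₁ ≤ π₂ ≤ ⋯ ≤ π_r` is a weakly increasing chain of non-crossing partitions of `[n]`,
then the superposition of the chord diagrams `Ψ(π_1), …, Ψ(π_r)` (with the `s`-th diagram
drawn at the `s`-th sub-point of each bundled point) has pairwise non-crossing arches. -/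
theorem superposition_noncrossing (n r : ℕ) [NeZero n]
    (π : Fin r → Setoid (Fin n)) (M : Fin r → Fin (2 * n) → Fin (2 * n))
    (hnc : ∀ s, Noncross (π s)) (hchain : ∀ s t : Fin r, s ≤ t → π s ≤ π t)
    (hpsi : ∀ s, IsPsi (π s) (M s)) :
    ∀ s t : Fin r, s ≠ t → ∀ i j k l : Fin n,
      M s (upPt i) = prPt j → M t (upPt k) = prPt l →
        ¬ CrossPair (bundleL r s i) (bundleR r s j) (bundleL r t k) (bundleR r t l) := by
  intro s t hst i j k l hMs hMt HC
  have hr : 0 < r := s.pos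
  have hn : 0 < n := i.pos
  have hA : CycSucc (π s) i (j+1) := (hpsi s i (j+1)).mp (by rwa [add_sub_cancel_right])
  have hB : CycSucc (π t) k (l+1) := (hpsi t k (l+1)).mp (by rwa [add_sub_cancel_right])
  have FA1 : (π s) i (j+1) := hA.1
  have FB1 : (π t) k (l+1) := hB.1
  have FA2 : ∀ x : Fin n, (π s) i x → x ≠ i →
      ((j+1 : Fin n).val + n - i.val) % n ≤ (x.val + n - i.val) % n := by
    rcases hA.2 with ⟨_, hall⟩ | ⟨_, hmin⟩
    · intro x hx hxne; exact absurd (hall x hx) hxne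
    · exact hmin
  have FB2 : ∀ x : Fin n, (π t) k x → x ≠ k →
      ((l+1 : Fin n).val + n - k.val) % n ≤ (x.val + n - k.val) % n := by
    rcases hB.2 with ⟨_, hall⟩ | ⟨_, hmin⟩
    · intro x hx hxne; exact absurd (hall x hx) hxne
    · exact hmin
  have FAsing : (j+1 : Fin n) = i → ∀ x, (π s) i x → x = i := by
    intro he x hx
    rcases hA.2 with ⟨_, hall⟩ | ⟨hne, _⟩
    · exact hall x hx
    · exact absurd he hne
  have FBsing : (l+1 : Fin n) = k → ∀ x, (π t) k x → x = k := by
    intro he x hx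
    rcases hB.2 with ⟨_, hall⟩ | ⟨hne, _⟩
    · exact hall x hx
    · exact absurd he hne
  -- value bounds
  have his := i.isLt
  have hjs := j.isLt
  have hks := k.isLt
  have hls := l.isLt
  have hsr := s.isLt
  have htr := t.isLt
  have hstv : s.val ≠ t.val := fun h => hst (Fin.ext h)
  have hself : (i.val + n - i.val) % n = 0 := SNC.coord_self i
  have bJ : (j.val+n-i.val) % n < n := Nat.mod_lt _ hn
  have bK : (k.val+n-i.val) % n < n := Nat.mod_lt _ hn
  have bL : (l.val+n-i.val) % n < n := Nat.mod_lt _ hn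
  -- rotate the crossing data around the base point 2*r*i
  rw [show bundleR r s j = 2*r*j.val + (2*r-1-s.val) from by unfold bundleR; omega,
      show bundleR r t l = 2*r*l.val + (2*r-1-t.val) from by unfold bundleR; omega] at HC
  unfold bundleL at HC
  have hmp : 2*r*i.val < 2*r*n := by
    have := SNC.pt_lt (r := r) (c := 0) his (by omega)
    omega
  have HC2 := SNC.cross_rot (SNC.pt_lt his (by omega)) (SNC.pt_lt hjs (by omega))
    (SNC.pt_lt hks (by omega)) (SNC.pt_lt hls (by omega)) hmp HC
  rw [SNC.rot_pt r n i.val i.val s.val his his (by omega),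
      SNC.rot_pt r n j.val i.val (2*r-1-s.val) hjs his (by omega),
      SNC.rot_pt r n k.val i.val t.val hks his (by omega),
      SNC.rot_pt r n l.val i.val (2*r-1-t.val) hls his (by omega)] at HC2
  rw [show (i.val + n - i.val) = n from by omega, Nat.mod_self] at HC2
  simp only [Nat.mul_zero, Nat.zero_add] at HC2
  -- monotonicity facts to let omega compare the bundle coordinates
  have m1 := SNC.mono r ((j.val+n-i.val)%n) ((k.val+n-i.val)%n)
  have m2 := SNC.mono r ((k.val+n-i.val)%n) ((j.val+n-i.val)%n)
  have m3 := SNC.mono r ((j.val+n-i.val)%n) ((l.val+n-i.val)%n)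
  have m4 := SNC.mono r ((l.val+n-i.val)%n) ((j.val+n-i.val)%n)
  have m5 := SNC.mono r ((k.val+n-i.val)%n) ((l.val+n-i.val)%n)
  have m6 := SNC.mono r ((l.val+n-i.val)%n) ((k.val+n-i.val)%n)
  have m7 := SNC.mono0 r ((j.val+n-i.val)%n)
  have m8 := SNC.mono0 r ((k.val+n-i.val)%n)
  have m9 := SNC.mono0 r ((l.val+n-i.val)%n)
  unfold CrossPair at HC2
  -- the two interleaving scenarios
  have hX : ((k.val+n-i.val)%n ≤ (j.val+n-i.val)%n ∧
        (1 ≤ (k.val+n-i.val)%n ∨ s.val < t.val) ∧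
        ((j.val+n-i.val)%n < (l.val+n-i.val)%n ∨
          ((l.val+n-i.val)%n = (j.val+n-i.val)%n ∧ t.val < s.val)))
      ∨ (((l.val+n-i.val)%n < (j.val+n-i.val)%n ∨
          ((l.val+n-i.val)%n = (j.val+n-i.val)%n ∧ s.val < t.val)) ∧
        ((j.val+n-i.val)%n < (k.val+n-i.val)%n ∨
          ((k.val+n-i.val)%n = 0 ∧ t.val < s.val))) := by
    have e1 : s.val ≤ 2*r*((j.val+n-i.val)%n) + (2*r-1-s.val) := by omega
    rw [min_eq_left e1, max_eq_right e1] at HC2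
    rcases le_total (2*r*((k.val+n-i.val)%n) + t.val)
        (2*r*((l.val+n-i.val)%n) + (2*r-1-t.val)) with e2 | e2
    · rw [min_eq_left e2, max_eq_right e2] at HC2
      omega
    · rw [min_eq_right e2, max_eq_left e2] at HC2
      omega
  clear HC2 HC m1 m2 m3 m4 m5 m6 m7 m8 m9 hMs hMt hA hB
  -- chain transfers
  have chainST : s.val < t.val → ∀ a b : Fin n, (π s) a b → (π t) a b :=
    fun h a b hab => hchain s t (Fin.le_def.mpr (le_of_lt h)) hab
  have chainTS : t.val < s.val → ∀ a b : Fin n, (π t) a b → (π s) a b :=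
    fun h a b hab => hchain t s (Fin.le_def.mpr (le_of_lt h)) hab
  rcases hX with ⟨hKJ, hK1, hJL⟩ | ⟨hLJ, hJK⟩
  · -- scenario X1 : the point k is inside arch A, the point l' is outside
    rcases hJL with hJL | ⟨hLJeq, htslt⟩
    · -- J < L, hence J < n-1
      have hdj : ((j+1 : Fin n).val + n - i.val) % n = (j.val+n-i.val)%n + 1 :=
        SNC.fin_succ_coord i j (by omega)
      rcases Nat.eq_zero_or_pos ((k.val+n-i.val)%n) with hK0 | hKpos
      · -- k = i, necessarily s < t
        have hslt : s.val < t.val := by omega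
        have hki : k = i := SNC.coord_inj i k i (by omega)
        have hkj : (π t) k (j+1) := by rw [hki]; exact chainST hslt _ _ FA1
        have hne : (j+1 : Fin n) ≠ k := by intro h; rw [h] at hdj; omega
        rcases Nat.lt_or_ge ((l.val+n-i.val)%n) (n-1) with hLn | hLn
        · -- l' strictly inside the circle: use minimality of arch B at k with x = j+1
          have hdl : ((l+1 : Fin n).val + n - i.val) % n = (l.val+n-i.val)%n + 1 :=
            SNC.fin_succ_coord i l hLn
          have hcon := FB2 (j+1) hkj hne
          rw [hki] at hcon
          omega
        · -- l+1 = i = k : block of k in π t is a singleton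
          have hli : (l+1 : Fin n) = i := SNC.fin_succ_top i l (by omega)
          have hlk : (l+1 : Fin n) = k := by rw [hki]; exact hli
          have := FBsing hlk (j+1) hkj
          exact hne this
      · -- 1 ≤ K : k lies strictly inside arch A
        rcases Nat.lt_or_ge ((l.val+n-i.val)%n) (n-1) with hLn | hLn
        · -- generic position: four distinct cyclic points i, k, j+1, l+1
          have hdl : ((l+1 : Fin n).val + n - i.val) % n = (l.val+n-i.val)%n + 1 :=
            SNC.fin_succ_coord i l hLn
          rcases Nat.lt_or_ge s.val t.val with hslt | htlt
          · have key := SNC.nc_cyc (π t) (hnc t) i k (j+1) (l+1)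
              (by omega) (by omega) (by omega) (chainST hslt _ _ FA1) FB1
            have hkj : (π t) k (j+1) :=
              (π t).iseqv.trans ((π t).iseqv.symm key) (chainST hslt _ _ FA1)
            have hne : (j+1 : Fin n) ≠ k := by intro h; rw [h] at hdj; omega
            have hcon := FB2 (j+1) hkj hne
            have e1 := SNC.rebase_le i k (l+1) (by omega)
            have e2 := SNC.rebase_le i k (j+1) (by omega)
            omega
          · have htlt' : t.val < s.val := by omega
            have key := SNC.nc_cyc (π s) (hnc s) i k (j+1) (l+1)
              (by omega) (by omega) (by omega) FA1 (chainTS htlt' _ _ FB1)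
            have hne : k ≠ i := by intro h; rw [h] at hKpos; omega
            have hcon := FA2 k key hne
            omega
        · -- l+1 = i
          have hli : (l+1 : Fin n) = i := SNC.fin_succ_top i l (by omega)
          rcases Nat.lt_or_ge s.val t.val with hslt | htlt
          · have hki : (π t) k i := by rw [← hli]; exact FB1
            have hkj : (π t) k (j+1) :=
              (π t).iseqv.trans hki (chainST hslt _ _ FA1)
            have hne : (j+1 : Fin n) ≠ k := by intro h; rw [h] at hdj; omega
            have hcon := FB2 (j+1) hkj hne
            rw [hli] at hcon
            have e1 := SNC.rebase_gt i k i (by omega)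
            have e2 := SNC.rebase_le i k (j+1) (by omega)
            omega
          · have htlt' : t.val < s.val := by omega
            have hki : (π s) k i := chainTS htlt' _ _ (by rw [← hli]; exact FB1)
            have key : (π s) i k := (π s).iseqv.symm hki
            have hne : k ≠ i := by intro h; rw [h] at hKpos; omega
            have hcon := FA2 k key hne
            omega
    · -- L = J and t < s : the two arches end at the same primed bundle
      have hlj : l = j := SNC.coord_inj i l j hLJeq
      have hKpos : 1 ≤ (k.val+n-i.val)%n := by omega
      have hkj1 : (π s) k (j+1) := by rw [← hlj]; exact chainTS htslt _ _ FB1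
      have key : (π s) i k := (π s).iseqv.trans FA1 ((π s).iseqv.symm hkj1)
      have hne : k ≠ i := by intro h; rw [h] at hKpos; omega
      rcases Nat.lt_or_ge ((j.val+n-i.val)%n) (n-1) with hJn | hJn
      · have hdj : ((j+1 : Fin n).val + n - i.val) % n = (j.val+n-i.val)%n + 1 :=
          SNC.fin_succ_coord i j hJn
        have hcon := FA2 k key hne
        omega
      · have hji : (j+1 : Fin n) = i := SNC.fin_succ_top i j (by omega)
        have := FAsing hji k key
        exact hne this
  · -- scenario X2 : the point l' is inside arch A, the point k is outside
    rcases hJK with hJK | ⟨hK0, htslt⟩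
    · -- J < K, hence K ≥ 1 and J < n-1
      have hdj : ((j+1 : Fin n).val + n - i.val) % n = (j.val+n-i.val)%n + 1 :=
        SNC.fin_succ_coord i j (by omega)
      have hne : i ≠ k := by intro h; rw [← h] at hJK; omega
      rcases hLJ with hLJ | ⟨hLJeq, hslt⟩
      · -- L < J
        have hdl : ((l+1 : Fin n).val + n - i.val) % n = (l.val+n-i.val)%n + 1 :=
          SNC.fin_succ_coord i l (by omega)
        have hnel : (l+1 : Fin n) ≠ i := by intro h; rw [h] at hdl; omega
        rcases Nat.lt_or_ge ((j.val+n-i.val)%n + 1) ((k.val+n-i.val)%n) with hJK2 | hJK2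
        · -- generic position: i, l+1, j+1, k in cyclic order
          rcases Nat.lt_or_ge s.val t.val with hslt | htlt
          · have key := SNC.nc_cyc (π t) (hnc t) i (l+1) (j+1) k
              (by omega) (by omega) (by omega) (chainST hslt _ _ FA1)
              ((π t).iseqv.symm FB1)
            have hki : (π t) k i := (π t).iseqv.trans FB1 ((π t).iseqv.symm key)
            have hcon := FB2 i hki hne
            have e1 := SNC.rebase_gt i k (l+1) (by omega)
            have e2 := SNC.rebase_gt i k i (by omega)
            omega
          · have htlt' : t.val < s.val := by omega
            have key := SNC.nc_cyc (π s) (hnc s) i (l+1) (j+1) k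
              (by omega) (by omega) (by omega) FA1
              ((π s).iseqv.symm (chainTS htlt' _ _ FB1))
            have hcon := FA2 (l+1) key hnel
            omega
        · -- k = j+1
          have hkeq : k = (j+1 : Fin n) := SNC.coord_inj i k (j+1) (by omega)
          rcases Nat.lt_or_ge s.val t.val with hslt | htlt
          · have hik : (π t) i k := by rw [hkeq]; exact chainST hslt _ _ FA1
            have hki : (π t) k i := (π t).iseqv.symm hik
            have hcon := FB2 i hki hne
            have e1 := SNC.rebase_gt i k (l+1) (by omega)
            have e2 := SNC.rebase_gt i k i (by omega)
            omega
          · have htlt' : t.val < s.val := by omega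
            have hik : (π s) i k := by rw [hkeq]; exact FA1
            have hil : (π s) i (l+1) := (π s).iseqv.trans hik (chainTS htlt' _ _ FB1)
            have hcon := FA2 (l+1) hil hnel
            omega
      · -- L = J and s < t : shared primed bundle
        have hlj : l = j := SNC.coord_inj i l j hLJeq
        have hkj1 : (π t) k (j+1) := by rw [← hlj]; exact FB1
        rcases Nat.lt_or_ge ((j.val+n-i.val)%n + 1) ((k.val+n-i.val)%n) with hJK2 | hJK2
        · -- K ≥ J+2
          have hik : (π t) i k := (π t).iseqv.trans (chainST hslt _ _ FA1)
            ((π t).iseqv.symm hkj1)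
          have hki : (π t) k i := (π t).iseqv.symm hik
          have hcon := FB2 i hki hne
          rw [hlj] at hcon
          have e1 := SNC.rebase_gt i k (j+1) (by omega)
          have e2 := SNC.rebase_gt i k i (by omega)
          omega
        · -- k = j+1 = l+1 : singleton block of k in π t
          have hkeq : k = (j+1 : Fin n) := SNC.coord_inj i k (j+1) (by omega)
          have hlk : (l+1 : Fin n) = k := by rw [hlj]; exact hkeq.symm
          have hki : (π t) k i :=
            (π t).iseqv.symm (by rw [hkeq]; exact chainST hslt _ _ FA1)
          have := FBsing hlk i hki
          exact hne this
    · -- K = 0 and t < s : k = i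
      have hki : k = i := SNC.coord_inj i k i (by omega)
      have hLJ' : (l.val+n-i.val)%n < (j.val+n-i.val)%n := by omega
      have hdl : ((l+1 : Fin n).val + n - i.val) % n = (l.val+n-i.val)%n + 1 :=
        SNC.fin_succ_coord i l (by omega)
      have hil : (π s) i (l+1) := chainTS htslt _ _ (by rw [← hki]; exact FB1)
      have hne : (l+1 : Fin n) ≠ i := by intro h; rw [h] at hdl; omega
      rcases Nat.lt_or_ge ((j.val+n-i.val)%n) (n-1) with hJn | hJn
      · have hdj : ((j+1 : Fin n).val + n - i.val) % n = (j.val+n-i.val)%n + 1 :=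
          SNC.fin_succ_coord i j hJn
        have hcon := FA2 (l+1) hil hne
        omega
      · have hji : (j+1 : Fin n) = i := SNC.fin_succ_top i j (by omega)
        have := FAsing hji (l+1) hil
        exact hne this
end
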